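/- arXiv:2211.10939 — 8 statements merged into one kernel-verified Lean document; each statement's English description precedes it below -/
import Mathlib

section
/- Let s, t be positive integers and let G be a weakly K_{s,t}-saturated graph on s+t vertices (i.e., G is a K_{s,t}-free spanning subgraph of the complete graph K_{s+t} whose non-edges can be added one at a time so that each added edge creates a new copy of K_{s,t}). Then the complement of G contains no cycle. -/
open SimpleGraph

section WSatDefs

variable {α β : Type*}

/-- `G` contains a copy of `F` as a subgraph. -/
def HasCopy (F : SimpleGraph α) (G : SimpleGraph β) : Prop :=
  ∃ f : α ↪ β, ∀ a b, F.Adj a b → G.Adj (f a) (f b)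

/-- `G` contains a copy of `F` using the edge `e`. -/
def CopyAt (F : SimpleGraph α) (G : SimpleGraph β) (e : Sym2 β) : Prop :=
  ∃ f : α ↪ β, (∀ a b, F.Adj a b → G.Adj (f a) (f b)) ∧
    ∃ a b, F.Adj a b ∧ s(f a, f b) = e

/-- One step of a weakly `F`-saturation process: add one missing edge, creating a
new copy of `F` containing that edge. -/
def SatStep (F : SimpleGraph α) (H H' : SimpleGraph β) : Prop :=
  ∃ e ∈ Hᶜ.edgeSet, H' = H ⊔ SimpleGraph.fromEdgeSet {e} ∧ CopyAt F H' e

/-- `H'` is reachable from `H` by a weakly `F`-saturation process. -/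
def SatReaches (F : SimpleGraph α) : SimpleGraph β → SimpleGraph β → Prop :=
  Relation.ReflTransGen (SatStep F)

/-- `G` is weakly `F`-saturated: `F`-free, and the missing edges can be added one at
a time, each creating a new copy of `F` containing it, until the complete graph. -/
def WeaklySat (F : SimpleGraph α) (G : SimpleGraph β) : Prop :=
  ¬ HasCopy F G ∧ SatReaches F G ⊤

/-- The weak saturation number: minimum number of edges of a weakly `F`-saturated
graph on `n` vertices. -/
noncomputable def wsat (n : ℕ) (F : SimpleGraph α) : ℕ :=
  sInf {m | ∃ G : SimpleGraph (Fin n), WeaklySat F G ∧ G.edgeSet.ncard = m}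

/-- The complete bipartite graph `K_{s,t}`. -/
def Kst (s t : ℕ) : SimpleGraph (Fin s ⊕ Fin t) :=
  completeBipartiteGraph (Fin s) (Fin t)

end WSatDefs

/-!
Let `C` be a cycle in the complement of `G` and stop the saturation process at the first
moment it adds an edge `e` of `C`. The new copy of `K_{s,t}` through `e` spans all `s + t`
vertices, so its two parts 2-colour the vertex set and every bichromatic pair is an edge of
the current graph. The other edges of `C` are still missing, hence monochromatic, while `e`
is bichromatic: `C` would change colour an odd number of times.
-/

namespace SimpleGraph

variable {V : Type*} {G : SimpleGraph V}

theorem Walk.even_countP_darts_ne_iff (c : V → Bool) {u v : V} (p : G.Walk u v) :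
    Even (p.darts.countP fun d => c d.fst != c d.snd) ↔ c u = c v := by
  induction p with
  | nil => simp
  | @cons u w v h p ih =>
    rw [Walk.darts_cons, List.countP_cons]
    split_ifs with huw <;> simp only [Nat.even_add_one, add_zero, ih] <;>
      revert huw <;> cases c u <;> cases c w <;> cases c v <;> decide

theorem Walk.countP_darts_edge_beq [DecidableEq V] {u v : V} (p : G.Walk u v) (e : Sym2 V) :
    p.darts.countP (fun d => d.edge == e) = p.edges.count e := by
  rw [Walk.edges, List.count, List.countP_map]
  rfl

end SimpleGraph

theorem SatReaches.exists_copyAt_of_subset_compl {α β : Type*} {F : SimpleGraph α}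
    {H : SimpleGraph β} (hH : SatReaches F H ⊤) {S : Set (Sym2 β)} (hS : S ⊆ Hᶜ.edgeSet)
    (hne : S.Nonempty) :
    ∃ K : SimpleGraph β, S ⊆ Kᶜ.edgeSet ∧ ∃ e ∈ S, CopyAt F (K ⊔ fromEdgeSet {e}) e := by
  induction hH using Relation.ReflTransGen.head_induction_on with
  | refl =>
    obtain ⟨e, he⟩ := hne
    simpa using hS he
  | head step _ ih =>
    obtain ⟨e, -, rfl, hcopy⟩ := step
    by_cases he : e ∈ S
    · exact ⟨_, hS, e, he, hcopy⟩
    · refine ih fun x hx => ?_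
      have hxe : x ≠ e := fun h => he (h ▸ hx)
      have hxH := hS hx
      induction x using Sym2.ind
      simp only [mem_edgeSet, compl_adj, sup_adj, fromEdgeSet_adj, Set.mem_singleton_iff]
        at hxH ⊢
      tauto

theorem Kst_adj {s t : ℕ} {a b : Fin s ⊕ Fin t} : (Kst s t).Adj a b ↔ a.isLeft ≠ b.isLeft := by
  cases a <;> cases b <;> simp [Kst]

theorem isLeft_symm_ne_iff_eq_edge {V : Type*} {s t : ℕ} {K : SimpleGraph V}
    (f : Fin s ⊕ Fin t ≃ V) {a b : Fin s ⊕ Fin t} (hab : (Kst s t).Adj a b)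
    (hf : ∀ a' b', (Kst s t).Adj a' b' → (K ⊔ fromEdgeSet {s(f a, f b)}).Adj (f a') (f b'))
    {x y : V} (hxy : ¬ K.Adj x y) :
    (f.symm x).isLeft ≠ (f.symm y).isLeft ↔ s(x, y) = s(f a, f b) := by
  constructor
  · intro hc
    have := hf _ _ (Kst_adj.2 hc)
    simp only [Equiv.apply_symm_apply, sup_adj, fromEdgeSet_adj, Set.mem_singleton_iff] at this
    tauto
  · intro he
    rcases Sym2.eq_iff.1 he with ⟨rfl, rfl⟩ | ⟨rfl, rfl⟩ <;> simpa [Kst_adj, ne_comm] using hab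

theorem complement_acyclic_of_weaklySat_general (s t : ℕ)
    (G : SimpleGraph (Fin (s + t))) (h : WeaklySat (Kst s t) G) :
    Gᶜ.IsAcyclic := by
  intro v p hp
  obtain ⟨K, hK, _, he, f, hf, a, b, hab, rfl⟩ := h.2.exists_copyAt_of_subset_compl
    (S := {e | e ∈ p.edges}) (fun _ he => p.edges_subset_edgeSet he)
    (List.exists_mem_of_ne_nil _ (mt Walk.edges_eq_nil.1 hp.not_nil))
  let φ : Fin s ⊕ Fin t ≃ Fin (s + t) :=
    Equiv.ofBijective f ((Fintype.bijective_iff_injective_and_card f).2 ⟨f.injective, by simp⟩)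
  let c x := (φ.symm x).isLeft
  have hchange : ∀ d ∈ p.darts, (c d.fst != c d.snd) = true ↔ (d.edge == s(f a, f b)) = true :=
    fun d hd => by
      simpa [c, φ, Dart.edge] using
        isLeft_symm_ne_iff_eq_edge φ hab hf (hK (List.mem_map_of_mem hd)).2
  have hcount := (p.even_countP_darts_ne_iff c).2 rfl
  rw [List.countP_congr hchange, p.countP_darts_edge_beq,
    List.count_eq_one_of_mem hp.edges_nodup he] at hcount
  exact Nat.not_even_one hcount

theorem complement_acyclic_of_weaklySat (s t : ℕ) (hs : 0 < s) (ht : 0 < t)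
    (G : SimpleGraph (Fin (s + t))) (h : WeaklySat (Kst s t) G) :
    Gᶜ.IsAcyclic :=
  complement_acyclic_of_weaklySat_general s t G h
end

section
/- Let s, t be positive integers with gcd(s,t) ≠ 1, and let G be a weakly K_{s,t}-saturated graph on s+t vertices. Then the complement of G is disconnected. -/
open SimpleGraph

/-!
Let `d` divide both `s` and `t`, and call a vertex set closed in `K` if no edge of `K` leaves
it. The invariant "every closed set of the complement has size divisible by `d`" survives each
saturation step: the new copy of `K_{s,t}` spans all `s + t` vertices, so its part `A` of size
`s` and the other part of size `t` are closed in the new complement, which is the old one minus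
the added edge `uv` with `u ∈ A`, `v ∉ A`. A new closed set `T` inside `A` is closed in the old
complement if `u ∉ T`, and otherwise `A \ T` is; either way `d ∣ #T`, and likewise inside `Aᶜ`.
If `Gᶜ` is connected the invariant holds at the start, since the only closed sets are `∅` and
the whole vertex set. At the end the complement is empty, every singleton is closed, so `d = 1`.
-/

open Finset

namespace SimpleGraph

variable {V : Type*}

def IsAdjClosed (K : SimpleGraph V) (S : Finset V) : Prop :=
  ∀ x ∈ S, ∀ y, K.Adj x y → y ∈ S

theorem isAdjClosed_bot (S : Finset V) : (⊥ : SimpleGraph V).IsAdjClosed S :=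
  fun _ _ _ h => h.elim

theorem compl_sup_fromEdgeSet (H : SimpleGraph V) (s : Set (Sym2 V)) :
    (H ⊔ fromEdgeSet s)ᶜ = Hᶜ.deleteEdges s := by
  rw [compl_sup, deleteEdges, sdiff_eq]

namespace IsAdjClosed

variable {K : SimpleGraph V} {S T : Finset V}

theorem mem_of_reachable (hS : K.IsAdjClosed S) {x y : V} (hxy : K.Reachable x y)
    (hx : x ∈ S) : y ∈ S := by
  obtain ⟨w⟩ := hxy
  induction w with
  | nil => exact hx
  | cons h _ ih => exact ih (hS _ hx _ h)

theorem eq_empty_or_eq_univ [Fintype V] (hS : K.IsAdjClosed S) (hK : K.Connected) :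
    S = ∅ ∨ S = univ := by
  refine S.eq_empty_or_nonempty.imp_right fun ⟨x, hx⟩ => ?_
  exact eq_univ_of_forall fun y => hS.mem_of_reachable (hK x y) hx

theorem of_deleteEdges {u v : V} (hS : (K.deleteEdges {s(u, v)}).IsAdjClosed S)
    (hu : u ∉ S) (hv : v ∉ S) : K.IsAdjClosed S := by
  refine fun x hx y hxy => hS x hx y ((deleteEdges_adj ..).2 ⟨hxy, fun he => ?_⟩)
  rcases Sym2.eq_iff.1 (Set.mem_singleton_iff.1 he) with ⟨rfl, -⟩ | ⟨rfl, -⟩ <;> contradiction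

variable [DecidableEq V]

theorem inter (hS : K.IsAdjClosed S) (hT : K.IsAdjClosed T) : K.IsAdjClosed (S ∩ T) :=
  fun x hx y hxy => mem_inter.2 ⟨hS x (mem_inter.1 hx).1 y hxy, hT x (mem_inter.1 hx).2 y hxy⟩

theorem sdiff (hS : K.IsAdjClosed S) (hT : K.IsAdjClosed T) : K.IsAdjClosed (S \ T) :=
  fun x hx y hxy => mem_sdiff.2
    ⟨hS x (mem_sdiff.1 hx).1 y hxy, fun hy => (mem_sdiff.1 hx).2 (hT y hy x hxy.symm)⟩

theorem compl [Fintype V] (hS : K.IsAdjClosed S) : K.IsAdjClosed Sᶜ :=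
  fun x hx y hxy => mem_compl.2 fun hy => mem_compl.1 hx (hS y hy x hxy.symm)

end IsAdjClosed

section

variable [DecidableEq V] {K : SimpleGraph V} {d : ℕ} {u v : V}

theorem dvd_card_of_subset_of_deleteEdges (hK : ∀ S, K.IsAdjClosed S → d ∣ #S)
    {C T : Finset V} (hC : (K.deleteEdges {s(u, v)}).IsAdjClosed C) (hdC : d ∣ #C)
    (hv : v ∉ C) (hT : (K.deleteEdges {s(u, v)}).IsAdjClosed T) (hTC : T ⊆ C) : d ∣ #T := by
  by_cases hu : u ∈ T
  · have hdiff : d ∣ #(C \ T) := hK _ <| (hC.sdiff hT).of_deleteEdges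
      (fun h => (mem_sdiff.1 h).2 hu) (fun h => hv (mem_sdiff.1 h).1)
    rw [card_sdiff_of_subset hTC] at hdiff
    exact (Nat.dvd_sub_iff_right (card_le_card hTC) hdC).1 hdiff
  · exact hK _ (hT.of_deleteEdges hu fun h => hv (hTC h))

theorem dvd_card_of_deleteEdges [Fintype V] (hK : ∀ S, K.IsAdjClosed S → d ∣ #S)
    {A : Finset V} (hA : (K.deleteEdges {s(u, v)}).IsAdjClosed A) (hu : u ∈ A) (hv : v ∉ A)
    (hdA : d ∣ #A) (hdAc : d ∣ #Aᶜ) {S : Finset V}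
    (hS : (K.deleteEdges {s(u, v)}).IsAdjClosed S) : d ∣ #S := by
  have hAc : (K.deleteEdges {s(v, u)}).IsAdjClosed Aᶜ := Sym2.eq_swap ▸ hA.compl
  rw [← card_inter_add_card_sdiff S A, sdiff_eq_inter_compl]
  exact dvd_add
    (dvd_card_of_subset_of_deleteEdges hK hA hdA hv (hS.inter hA) inter_subset_right)
    (dvd_card_of_subset_of_deleteEdges hK hAc hdAc (notMem_compl.2 hu)
      (Sym2.eq_swap ▸ hS.inter hA.compl) inter_subset_right)

end

open Function

theorem isAdjClosed_compl_map_inl {α β V : Type*} [Fintype α] {H : SimpleGraph V}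
    {f : α ⊕ β ↪ V} (hf : Surjective f)
    (hH : ∀ a b, (completeBipartiteGraph α β).Adj a b → H.Adj (f a) (f b)) :
    Hᶜ.IsAdjClosed (univ.map (Embedding.inl.trans f)) := by
  intro x hx y hxy
  obtain ⟨a, -, rfl⟩ := mem_map.1 hx
  obtain ⟨b | b, rfl⟩ := hf y
  · exact mem_map_of_mem _ (mem_univ b)
  · exact absurd (hH (.inl a) (.inr b) (by simp)) hxy.2

variable {α β V : Type*} [Fintype α] [Fintype β] [Fintype V] [DecidableEq V]

theorem SatStep.exists_isAdjClosed_compl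
    (hcard : Fintype.card α + Fintype.card β = Fintype.card V)
    {H H' : SimpleGraph V} (h : SatStep (completeBipartiteGraph α β) H H') :
    ∃ u v A, H'ᶜ = Hᶜ.deleteEdges {s(u, v)} ∧ H'ᶜ.IsAdjClosed A ∧ u ∈ A ∧ v ∉ A ∧
      #A = Fintype.card α ∧ #Aᶜ = Fintype.card β := by
  obtain ⟨e, -, rfl, f, hf, a₀, b₀, hab, rfl⟩ := h
  have hsurj : Surjective f :=
    ((Fintype.bijective_iff_injective_and_card f).2 ⟨f.injective, by simp [hcard]⟩).2
  obtain ⟨a, b, he⟩ : ∃ a b, s(f a₀, f b₀) = s(f (.inl a), f (.inr b)) := by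
    rcases a₀ with a | b <;> rcases b₀ with a' | b' <;> simp at hab
    exacts [⟨a, b', rfl⟩, ⟨a', b, Sym2.eq_swap⟩]
  have hcardA : #(univ.map (Embedding.inl.trans f)) = Fintype.card α := by simp
  rw [he] at hf ⊢
  refine ⟨f (.inl a), f (.inr b), _, compl_sup_fromEdgeSet _ _,
    isAdjClosed_compl_map_inl hsurj hf, by simp, by simp, hcardA, ?_⟩
  rw [card_compl, hcardA]
  omega

theorem SatStep.dvd_card_of_isAdjClosed_compl {d : ℕ}
    (hcard : Fintype.card α + Fintype.card β = Fintype.card V)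
    (hα : d ∣ Fintype.card α) (hβ : d ∣ Fintype.card β)
    {H H' : SimpleGraph V} (h : SatStep (completeBipartiteGraph α β) H H')
    (hH : ∀ S, Hᶜ.IsAdjClosed S → d ∣ #S) {S : Finset V} (hS : H'ᶜ.IsAdjClosed S) :
    d ∣ #S := by
  obtain ⟨u, v, A, hH', hA, hu, hv, hcardA, hcardAc⟩ := h.exists_isAdjClosed_compl hcard
  rw [hH'] at hA hS
  exact dvd_card_of_deleteEdges hH hA hu hv (hcardA ▸ hα) (hcardAc ▸ hβ) hS

theorem SatReaches.dvd_card_of_isAdjClosed_compl {d : ℕ}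
    (hcard : Fintype.card α + Fintype.card β = Fintype.card V)
    (hα : d ∣ Fintype.card α) (hβ : d ∣ Fintype.card β)
    {H H' : SimpleGraph V} (h : SatReaches (completeBipartiteGraph α β) H H')
    (hH : ∀ S, Hᶜ.IsAdjClosed S → d ∣ #S) {S : Finset V} (hS : H'ᶜ.IsAdjClosed S) :
    d ∣ #S := by
  induction h generalizing S with
  | refl => exact hH S hS
  | tail _ hstep ih => exact hstep.dvd_card_of_isAdjClosed_compl hcard hα hβ (fun _ => ih) hS

theorem WeaklySat.eq_one_of_connected_compl {d : ℕ}
    (hcard : Fintype.card α + Fintype.card β = Fintype.card V)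
    (hα : d ∣ Fintype.card α) (hβ : d ∣ Fintype.card β) {G : SimpleGraph V}
    (hG : WeaklySat (completeBipartiteGraph α β) G) (hconn : Gᶜ.Connected) : d = 1 := by
  have hGc (S : Finset V) (hS : Gᶜ.IsAdjClosed S) : d ∣ #S := by
    rcases hS.eq_empty_or_eq_univ hconn with rfl | rfl
    · exact dvd_zero d
    · rw [card_univ, ← hcard]
      exact dvd_add hα hβ
  obtain ⟨x⟩ := hconn.nonempty
  have hx := hG.2.dvd_card_of_isAdjClosed_compl hcard hα hβ hGc (S := {x})
    (compl_top (α := SimpleGraph V) ▸ isAdjClosed_bot _)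
  simpa using hx

end SimpleGraph

theorem complement_disconnected_of_weaklySat_general (s t : ℕ)
    (hgcd : Nat.gcd s t ≠ 1)
    (G : SimpleGraph (Fin (s + t))) (h : WeaklySat (Kst s t) G) :
    ¬ Gᶜ.Connected :=
  fun hconn => hgcd <| h.eq_one_of_connected_compl (by simp)
    (by simpa using Nat.gcd_dvd_left s t) (by simpa using Nat.gcd_dvd_right s t) hconn

theorem complement_disconnected_of_weaklySat (s t : ℕ) (hs : 0 < s) (ht : 0 < t)
    (hgcd : Nat.gcd s t ≠ 1)
    (G : SimpleGraph (Fin (s + t))) (h : WeaklySat (Kst s t) G) :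
    ¬ Gᶜ.Connected :=
  complement_disconnected_of_weaklySat_general s t hgcd G h
end

section
/- For all positive integers s and t, wsat(s+t, K_{s,t}) ≥ C(s+t-1, 2), i.e., every weakly K_{s,t}-saturated graph on s+t vertices has at least C(s+t-1,2) edges. -/
open SimpleGraph

/-! Along a saturation process for `K_{s,t}` on `s + t` vertices every copy of `K_{s,t}` is
spanning, so every edge of the complement of the current graph stays inside one side of it.
Hence each added edge joins two components of the complement of the new graph, and going
backwards from `K_{s+t}` the quantity `#E(Hᶜ) + #components(Hᶜ)` never exceeds `s + t`: the
complement of a weakly saturated graph has at most `s + t - 1` edges.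

For `wsat` we also need a weakly saturated graph: the complement of a star with `max s t`
leaves. It is `K_{s,t}`-free because the centre and all leaves would lie on one side, and its
missing edges can be added back one at a time, since while fewer than `max s t` leaves remain,
the centre and the remaining leaves fit on the larger side with the new leaf on the other. -/

namespace SimpleGraph

variable {V : Type*}

theorem card_connectedComponent_sup_edge_lt [Finite V] {G : SimpleGraph V} {u v : V}
    (h : ¬G.Reachable u v) :
    Nat.card (G ⊔ edge u v).ConnectedComponent < Nat.card G.ConnectedComponent := by
  have : Fintype G.ConnectedComponent := Fintype.ofFinite _
  have : Fintype (G ⊔ edge u v).ConnectedComponent := Fintype.ofFinite _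
  rw [Nat.card_eq_fintype_card, Nat.card_eq_fintype_card]
  refine Fintype.card_lt_of_surjective_not_injective _
    (ConnectedComponent.surjective_map_ofLE le_sup_left) fun hinj => h ?_
  refine ConnectedComponent.eq.1 (hinj ?_)
  simp only [ConnectedComponent.map_mk, ConnectedComponent.eq]
  have hne : u ≠ v := by rintro rfl; exact h .rfl
  exact Adj.reachable (Or.inr ((edge_adj ..).2 ⟨.inl ⟨rfl, rfl⟩, hne⟩))

theorem ncard_edgeSet_add_ncard_edgeSet_compl [Fintype V] (G : SimpleGraph V) :
    G.edgeSet.ncard + Gᶜ.edgeSet.ncard = (Fintype.card V).choose 2 := by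
  classical
  rw [← Set.ncard_union_eq (disjoint_edgeSet.2 disjoint_compl_right), ← edgeSet_sup,
    sup_compl_eq_top, Set.ncard_eq_toFinset_card', ← card_edgeFinset_top_eq_card_choose_two]
  rfl

theorem choose_two_le_ncard_edgeSet_of_ncard_edgeSet_compl_le [Fintype V] {G : SimpleGraph V}
    (h : Gᶜ.edgeSet.ncard ≤ Fintype.card V - 1) :
    (Fintype.card V - 1).choose 2 ≤ G.edgeSet.ncard := by
  have hsum := G.ncard_edgeSet_add_ncard_edgeSet_compl
  cases hn : Fintype.card V with
  | zero => simp
  | succ n =>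
    have hpascal : (n + 1).choose 2 = n.choose 2 + n := by
      simp [Nat.choose_succ_succ', add_comm]
    rw [hn, hpascal] at hsum
    rw [hn] at h
    simp only [Nat.add_sub_cancel] at h ⊢
    omega

end SimpleGraph

section CompleteBipartite

variable {α β V : Type*} {H : SimpleGraph V}

theorem isLeft_symm_eq_of_reachable_compl (f : α ⊕ β ≃ V)
    (hf : ∀ a b, (completeBipartiteGraph α β).Adj a b → H.Adj (f a) (f b)) {x y : V}
    (hxy : Hᶜ.Reachable x y) : (f.symm x).isLeft = (f.symm y).isLeft := by
  have hside : ∀ x y, Hᶜ.Adj x y → (f.symm x).isLeft = (f.symm y).isLeft := by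
    intro x y hxy
    by_contra hne
    have := hf (f.symm x) (f.symm y) (by cases hx : f.symm x <;> cases hy : f.symm y <;> simp_all)
    simp only [Equiv.apply_symm_apply] at this
    exact hxy.2 this
  rw [reachable_iff_reflTransGen] at hxy
  induction hxy with
  | refl => rfl
  | tail _ hadj ih => exact ih.trans (hside _ _ hadj)

theorem CopyAt.not_reachable_compl [Fintype α] [Fintype β] [Fintype V]
    (hV : Fintype.card V = Fintype.card α + Fintype.card β) {u v : V}
    (h : CopyAt (completeBipartiteGraph α β) H s(u, v)) : ¬Hᶜ.Reachable u v := by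
  obtain ⟨f, hf, a, b, hab, hfab⟩ := h
  have hbij : Function.Bijective f :=
    (Fintype.bijective_iff_injective_and_card f).2 ⟨f.injective, by simp [hV]⟩
  have key : ¬Hᶜ.Reachable (f a) (f b) := fun hr => by
    have := isLeft_symm_eq_of_reachable_compl (Equiv.ofBijective f hbij) hf hr
    simp only [Equiv.ofBijective_symm_apply_apply] at this
    cases a <;> cases b <;> simp_all
  rcases Sym2.eq_iff.1 hfab with ⟨rfl, rfl⟩ | ⟨rfl, rfl⟩
  · exact key
  · exact fun hr => key hr.symm

end CompleteBipartite

section Saturation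

variable {α β V : Type*} [Fintype α] [Fintype β] [Fintype V] {G H K : SimpleGraph V}

theorem SatStep.ncard_edgeSet_compl_add_card_connectedComponent_le
    (hV : Fintype.card V = Fintype.card α + Fintype.card β)
    (h : SatStep (completeBipartiteGraph α β) H K) :
    Hᶜ.edgeSet.ncard + Nat.card Hᶜ.ConnectedComponent ≤
      Kᶜ.edgeSet.ncard + Nat.card Kᶜ.ConnectedComponent := by
  obtain ⟨e, he, rfl, hcopy⟩ := h
  induction e using Sym2.ind with | _ u v =>
  rw [show fromEdgeSet {s(u, v)} = edge u v from rfl] at hcopy ⊢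
  have hadj : Hᶜ.Adj u v := he
  have hsplit : (H ⊔ edge u v)ᶜ ⊔ edge u v = Hᶜ := by
    rw [compl_sup, ← sdiff_eq, sdiff_sup_self, sup_eq_left]
    exact (edge_le_iff _).2 (Or.inr hadj)
  have hnadj : s(u, v) ∉ (H ⊔ edge u v)ᶜ.edgeSet := by simp [edge_adj, hadj.ne]
  have hcomponents := card_connectedComponent_sup_edge_lt (hcopy.not_reachable_compl hV)
  have hedges : Hᶜ.edgeSet.ncard = (H ⊔ edge u v)ᶜ.edgeSet.ncard + 1 := by
    rw [← hsplit, edgeSet_sup, edgeSet_edge_of_ne hadj.ne, Set.union_singleton,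
      Set.ncard_insert_of_notMem hnadj]
  rw [hsplit] at hcomponents
  omega

theorem SatReaches.ncard_edgeSet_compl_add_card_connectedComponent_le
    (hV : Fintype.card V = Fintype.card α + Fintype.card β)
    (h : SatReaches (completeBipartiteGraph α β) G ⊤) :
    Gᶜ.edgeSet.ncard + Nat.card Gᶜ.ConnectedComponent ≤ Fintype.card V := by
  induction h using Relation.ReflTransGen.head_induction_on with
  | refl =>
    rw [compl_top, edgeSet_bot, Set.ncard_empty, zero_add, ← Nat.card_eq_fintype_card]
    exact Nat.card_le_card_of_surjective _ Quot.mk_surjective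
  | head hstep _ ih =>
    exact (hstep.ncard_edgeSet_compl_add_card_connectedComponent_le hV).trans ih

theorem SatReaches.choose_two_le_ncard_edgeSet
    (hV : Fintype.card V = Fintype.card α + Fintype.card β)
    (h : SatReaches (completeBipartiteGraph α β) G ⊤) :
    (Fintype.card V - 1).choose 2 ≤ G.edgeSet.ncard := by
  refine choose_two_le_ncard_edgeSet_of_ncard_edgeSet_compl_le ?_
  have hinv := h.ncard_edgeSet_compl_add_card_connectedComponent_le hV
  cases isEmpty_or_nonempty V
  · simp [Set.eq_empty_of_isEmpty]
  · have : 0 < Nat.card Gᶜ.ConnectedComponent := Nat.card_pos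
    omega

end Saturation

section Star

variable {V : Type*}

def starGraphOn (c : V) (L : Finset V) : SimpleGraph V :=
  SimpleGraph.fromRel fun x y => x = c ∧ y ∈ L

theorem starGraphOn_adj {c x y : V} {L : Finset V} :
    (starGraphOn c L).Adj x y ↔ x ≠ y ∧ (x = c ∧ y ∈ L ∨ y = c ∧ x ∈ L) :=
  fromRel_adj ..

variable [Fintype V] [DecidableEq V] {s t : ℕ}

theorem copyAt_kst_of_forall_adj {H : SimpleGraph V} (hV : Fintype.card V = s + t)
    {S : Finset V} (hS : S.card = s) (hadj : ∀ x ∈ S, ∀ y ∉ S, H.Adj x y) {u v : V}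
    (hu : u ∈ S) (hv : v ∉ S) : CopyAt (Kst s t) H s(u, v) := by
  let eS : {x // x ∈ S} ≃ Fin s := Fintype.equivFinOfCardEq (by simp [hS])
  let eT : {x // x ∉ S} ≃ Fin t := Fintype.equivFinOfCardEq (by
    rw [Fintype.card_subtype_compl, Fintype.card_coe, hV, hS]; omega)
  let f : Fin s ⊕ Fin t ≃ V := (eS.symm.sumCongr eT.symm).trans (Equiv.sumCompl (· ∈ S))
  refine ⟨f.toEmbedding, ?_, .inl (eS ⟨u, hu⟩), .inr (eT ⟨v, hv⟩), by simp [Kst],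
    by simp [f]⟩
  rintro (i | j) (i' | j') hab
  · simp [Kst] at hab
  · exact hadj _ (eS.symm i).2 _ (eT.symm j').2
  · exact (hadj _ (eS.symm i').2 _ (eT.symm j).2).symm
  · simp [Kst] at hab

theorem exists_card_eq_separating (hV : Fintype.card V = s + t) (hs : 0 < s) (ht : 0 < t)
    {A : Finset V} {k : V} (hk : k ∉ A) (hA : A.card ≤ max s t) :
    ∃ S : Finset V, S.card = s ∧ (k ∈ S ∧ Disjoint S A ∨ A ⊆ S ∧ k ∉ S) := by
  rcases le_total s t with hst | hts
  · obtain ⟨S, hkS, hSA, hS⟩ := Finset.exists_subsuperset_card_eq (t := Aᶜ) (n := s)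
      (Finset.singleton_subset_iff.2 (Finset.mem_compl.2 hk))
      (by rw [Finset.card_singleton]; exact hs) (by rw [Finset.card_compl, hV]; omega)
    exact ⟨S, hS, .inl ⟨hkS (Finset.mem_singleton_self k),
      Finset.subset_compl_iff_disjoint_right.1 hSA⟩⟩
  · obtain ⟨S, hAS, hSk, hS⟩ := Finset.exists_subsuperset_card_eq (t := {k}ᶜ) (n := s)
      (by simpa using hk) (by omega) (by rw [Finset.card_compl, hV]; simp; omega)
    exact ⟨S, hS, .inr ⟨hAS, by simpa using @hSk k⟩⟩

theorem satStep_compl_starGraphOn_insert (hV : Fintype.card V = s + t) (hs : 0 < s)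
    (ht : 0 < t) {c k : V} {L : Finset V} (hc : c ∉ insert k L) (hk : k ∉ L)
    (hL : L.card < max s t) :
    SatStep (Kst s t) (starGraphOn c (insert k L))ᶜ (starGraphOn c L)ᶜ := by
  rw [Finset.mem_insert, not_or] at hc
  obtain ⟨hck, hcL⟩ := hc
  have hstar : ∀ {x y}, (starGraphOn c L).Adj x y → x ∈ insert c L ∧ y ∈ insert c L := by
    intro x y h
    rw [starGraphOn_adj] at h
    rcases h with ⟨-, ⟨rfl, hy⟩ | ⟨rfl, hx⟩⟩ <;> simp [*]
  obtain ⟨S, hS, hsep⟩ := exists_card_eq_separating hV hs ht (A := insert c L) (k := k)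
    (by simp [hk, Ne.symm hck]) (by rw [Finset.card_insert_of_notMem hcL]; omega)
  have hadj : ∀ x ∈ S, ∀ y ∉ S, (starGraphOn c L)ᶜ.Adj x y := by
    refine fun x hx y hy => ⟨fun h => hy (h ▸ hx), fun h => ?_⟩
    rcases hsep with ⟨-, hdisj⟩ | ⟨hsub, -⟩
    · exact Finset.disjoint_left.1 hdisj hx (hstar h).1
    · exact hy (hsub (hstar h).2)
  refine ⟨s(c, k), by simp [starGraphOn_adj, hck], ?_, ?_⟩
  · ext x y
    simp only [compl_adj, sup_adj, fromEdgeSet_adj, Set.mem_singleton_iff, Sym2.eq_iff,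
      starGraphOn_adj, Finset.mem_insert]
    grind
  · rcases hsep with ⟨hkS, hdisj⟩ | ⟨hsub, hkS⟩
    · have hcS : c ∉ S := Finset.disjoint_right.1 hdisj (Finset.mem_insert_self c L)
      exact Sym2.eq_swap ▸ copyAt_kst_of_forall_adj hV hS hadj hkS hcS
    · exact copyAt_kst_of_forall_adj hV hS hadj (hsub (Finset.mem_insert_self c L)) hkS

theorem satReaches_compl_starGraphOn (hV : Fintype.card V = s + t) (hs : 0 < s) (ht : 0 < t)
    {c : V} {L : Finset V} (hc : c ∉ L) (hL : L.card ≤ max s t) :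
    SatReaches (Kst s t) (starGraphOn c L)ᶜ ⊤ := by
  induction L using Finset.induction_on with
  | empty =>
    have : starGraphOn c (∅ : Finset V) = ⊥ := by ext; simp [starGraphOn_adj]
    rw [this, compl_bot]
    exact .refl
  | insert k L hk ih =>
    rw [Finset.card_insert_of_notMem hk] at hL
    exact .head (satStep_compl_starGraphOn_insert hV hs ht hc hk (by omega))
      (ih (fun h => hc (Finset.mem_insert_of_mem h)) (by omega))

theorem not_hasCopy_compl_starGraphOn (hV : Fintype.card V = s + t) {c : V} {L : Finset V}
    (hc : c ∉ L) (hL : L.card = max s t) : ¬HasCopy (Kst s t) (starGraphOn c L)ᶜ := by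
  rintro ⟨f, hf⟩
  have hbij : Function.Bijective f :=
    (Fintype.bijective_iff_injective_and_card f).2 ⟨f.injective, by simp [hV]⟩
  let e := Equiv.ofBijective f hbij
  have hside : ∀ x ∈ insert c L, (e.symm x).isLeft = (e.symm c).isLeft := by
    intro x hx
    rcases Finset.mem_insert.1 hx with rfl | hxL
    · rfl
    refine isLeft_symm_eq_of_reachable_compl e hf (Adj.reachable ?_)
    rw [compl_compl, starGraphOn_adj]
    exact ⟨fun h => hc (h ▸ hxL), .inr ⟨rfl, hxL⟩⟩
  have hcompl : (insert c L)ᶜ.card + (max s t + 1) = s + t := by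
    rw [← hV, ← hL, ← Finset.card_insert_of_notMem hc, Finset.card_compl_add_card]
  have hcount : ∀ {m} (g : Fin m ↪ Fin s ⊕ Fin t),
      (∀ i, (g i).isLeft ≠ (e.symm c).isLeft) → m ≤ (insert c L)ᶜ.card := by
    intro m g hg
    have := Finset.card_le_card_of_injOn (s := Finset.univ) (e ∘ g)
      (fun i _ => Finset.mem_compl.2 fun hmem => hg i (by simpa using hside _ hmem))
      (e.injective.comp g.injective).injOn
    rwa [Finset.card_univ, Fintype.card_fin] at this
  cases hcs : e.symm c
  · have := hcount ⟨Sum.inr, Sum.inr_injective⟩ (by simp [hcs])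
    omega
  · have := hcount ⟨Sum.inl, Sum.inl_injective⟩ (by simp [hcs])
    omega

theorem exists_weaklySat_kst (hV : Fintype.card V = s + t) (hs : 0 < s) (ht : 0 < t) :
    ∃ G : SimpleGraph V, WeaklySat (Kst s t) G := by
  have : Nonempty V := Fintype.card_pos_iff.1 (by omega)
  let c := Classical.arbitrary V
  obtain ⟨L, hLc, hL⟩ := Finset.exists_subset_card_eq (s := Finset.univ.erase c) (n := max s t)
    (by rw [Finset.card_erase_of_mem (Finset.mem_univ c), Finset.card_univ, hV]; omega)
  have hc : c ∉ L := fun h => by simpa using hLc h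
  exact ⟨_, not_hasCopy_compl_starGraphOn hV hc hL,
    satReaches_compl_starGraphOn hV hs ht hc hL.le⟩

end Star

theorem le_wsat {α : Type*} {F : SimpleGraph α} {n m : ℕ}
    (hex : ∃ G : SimpleGraph (Fin n), WeaklySat F G)
    (hle : ∀ G : SimpleGraph (Fin n), WeaklySat F G → m ≤ G.edgeSet.ncard) :
    m ≤ wsat n F := by
  obtain ⟨G, hG⟩ := hex
  exact le_csInf ⟨_, G, hG, rfl⟩ fun _ ⟨G, hG, hcard⟩ => hcard ▸ hle G hG

theorem wsat_lower_bound (s t : ℕ) (hs : 0 < s) (ht : 0 < t) :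
    (s + t - 1).choose 2 ≤ wsat (s + t) (Kst s t) ∧
    ∀ G : SimpleGraph (Fin (s + t)), WeaklySat (Kst s t) G →
      (s + t - 1).choose 2 ≤ G.edgeSet.ncard := by
  have hV : Fintype.card (Fin (s + t)) = s + t := Fintype.card_fin _
  have hbound : ∀ G : SimpleGraph (Fin (s + t)), WeaklySat (Kst s t) G →
      (s + t - 1).choose 2 ≤ G.edgeSet.ncard := fun G hG => by
    simpa using hG.2.choose_two_le_ncard_edgeSet (by simp)
  exact ⟨le_wsat (exists_weaklySat_kst hV hs ht) hbound, hbound⟩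
end

section
/- For all positive integers s and t with gcd(s,t) = 1, the complement of the path P_{s+t} on s+t vertices is a weakly K_{s,t}-saturated graph; consequently wsat(s+t, K_{s,t}) ≤ C(s+t-1, 2). -/
open SimpleGraph

/-!
Put `n = s + t` and read the vertices of `P_n` modulo `n`, so that `P_n` is the cycle
`0, 1, …, n - 1, 0` without its edge `{n - 1, 0}`. As `s` is invertible modulo `n`, the path
edges are exactly the cycle edges `{ms - 1, ms}` for `m = 1, …, n - 1`; add them in this order.
At step `m`, the arc `(m - 1)s, …, ms - 1` of length `s` and the complementary arc of length `t`
span a `K_{s,t}` in the current graph: the only cross pairs that are consecutive on the cycle are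
the new edge `{ms - 1, ms}` and `{(m - 1)s - 1, (m - 1)s}`, which was added at step `m - 1` (or is
the non-path edge `{n - 1, 0}` when `m = 1`). The complement of `P_n` itself has no `K_{s,t}`:
a spanning copy would split the vertices into two parts with no path edge between them,
contradicting connectivity of `P_n`. Finally, the complement has `C(n, 2) - (n - 1) = C(n - 1, 2)`
edges.
-/

namespace SimpleGraph

lemma not_hasCopy_kst_compl_of_preconnected {V : Type*} [Fintype V] {G : SimpleGraph V}
    {s t : ℕ} (hG : G.Preconnected) (hV : Fintype.card V = s + t) (hs : 0 < s) (ht : 0 < t) :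
    ¬ HasCopy (Kst s t) Gᶜ := by
  rintro ⟨f, hf⟩
  have hsurj : Function.Surjective f :=
    ((Fintype.bijective_iff_injective_and_card f).mpr ⟨f.injective, by simp [hV]⟩).2
  obtain ⟨p⟩ := hG (f (.inl ⟨0, hs⟩)) (f (.inr ⟨0, ht⟩))
  obtain ⟨d, -, ⟨i, hi⟩, hout⟩ := p.exists_boundary_dart (Set.range (f ∘ .inl)) ⟨_, rfl⟩
    (by rintro ⟨i, hi⟩; simpa using f.injective hi)
  obtain ⟨_ | j, hj⟩ := hsurj d.toProd.2
  · exact hout ⟨_, hj⟩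
  · have hcross := hf (.inl i) (.inr j) (by simp [Kst])
    rw [Function.comp_apply] at hi
    rw [hi, hj] at hcross
    exact hcross.2 d.adj

lemma ncard_edgeSet_pathGraph (n : ℕ) : (pathGraph n).edgeSet.ncard = n - 1 := by
  rcases n with _ | n
  · simp [Subsingleton.elim (pathGraph 0) ⊥]
  have hrange :
      (pathGraph (n + 1)).edgeSet = Set.range fun i : Fin n => s(i.castSucc, i.succ) := by
    ext e
    induction e using Sym2.ind with
    | _ u v =>
      simp only [mem_edgeSet, pathGraph_adj, Set.mem_range, Sym2.eq_iff, Fin.ext_iff,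
        Fin.val_castSucc, Fin.val_succ]
      constructor
      · rintro (h | h)
        · exact ⟨⟨u, by omega⟩, .inl ⟨rfl, h⟩⟩
        · exact ⟨⟨v, by omega⟩, .inr ⟨rfl, h⟩⟩
      · rintro ⟨i, ⟨h₁, h₂⟩ | ⟨h₁, h₂⟩⟩ <;> omega
  rw [hrange, Set.ncard_range_of_injective, Nat.card_eq_fintype_card, Fintype.card_fin,
    Nat.add_sub_cancel]
  intro i j h
  simp only [Sym2.eq_iff, Fin.ext_iff, Fin.val_castSucc, Fin.val_succ] at h
  omega

lemma ncard_edgeSet_compl_pathGraph (n : ℕ) :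
    (pathGraph n)ᶜ.edgeSet.ncard = (n - 1).choose 2 := by
  classical
  rw [← top_sdiff, edgeSet_sdiff, Set.ncard_sdiff (edgeSet_mono le_top),
    ncard_edgeSet_pathGraph, Set.ncard_eq_toFinset_card', ← edgeFinset,
    card_edgeFinset_top_eq_card_choose_two, Fintype.card_fin]
  rcases n with _ | n
  · rfl
  · rw [Nat.choose_succ_succ', Nat.choose_one_right]
    simp

lemma deleteEdges_insert_sup_fromEdgeSet {V : Type*} {G : SimpleGraph V} {S : Set (Sym2 V)}
    {e : Sym2 V} (he : e ∈ G.edgeSet) (heS : e ∉ S) :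
    G.deleteEdges (insert e S) ⊔ fromEdgeSet {e} = G.deleteEdges S := by
  ext u v
  simp only [sup_adj, deleteEdges_adj, fromEdgeSet_adj, Set.mem_insert_iff,
    Set.mem_singleton_iff, not_or]
  constructor
  · rintro (⟨huv, -, hS⟩ | ⟨rfl, -⟩)
    · exact ⟨huv, hS⟩
    · exact ⟨he, heS⟩
  · rintro ⟨huv, hS⟩
    by_cases h : s(u, v) = e
    · exact .inr ⟨h, huv.ne⟩
    · exact .inl ⟨huv, h, hS⟩

lemma satReaches_of_forall_satStep {α β : Type*} {F : SimpleGraph α} {H : ℕ → SimpleGraph β}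
    {m : ℕ} (h : ∀ k < m, SatStep F (H k) (H (k + 1))) : SatReaches F (H 0) (H m) := by
  induction m with
  | zero => exact .refl
  | succ m ih => exact .tail (ih fun k hk => h k (by omega)) (h m (by omega))

section CyclicOrder

open Fin.NatCast Fin.CommRing

variable {n : ℕ} [NeZero n]

def cycleEdge (c : Fin n) : Sym2 (Fin n) := s(c - 1, c)

lemma cycleEdge_add (a c : Fin n) : cycleEdge (a + c) = (cycleEdge c).map (a + ·) := by
  simp only [cycleEdge, Sym2.map_mk, add_sub_assoc]

lemma mk_add_eq_cycleEdge_iff {a x y c : Fin n} :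
    s(a + x, a + y) = cycleEdge c ↔ s(x, y) = cycleEdge (c - a) := by
  rw [← add_sub_cancel a c, cycleEdge_add, add_sub_cancel_left, ← Sym2.map_mk,
    (Sym2.map.injective (add_right_injective a)).eq_iff]

lemma edgeSet_pathGraph : (pathGraph n).edgeSet = cycleEdge '' {c | c ≠ 0} := by
  ext e
  induction e using Sym2.ind with
  | _ u v =>
    simp only [mem_edgeSet, pathGraph_adj, Set.mem_image, Set.mem_ofPred_eq, cycleEdge]
    constructor
    · rintro (h | h)
      · have hv : v ≠ 0 := Fin.val_ne_zero_iff.mp (by omega)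
        refine ⟨v, hv, Sym2.eq_iff.mpr (.inl ⟨Fin.ext ?_, rfl⟩)⟩
        rw [Fin.val_sub_one_of_ne_zero hv]; omega
      · have hu : u ≠ 0 := Fin.val_ne_zero_iff.mp (by omega)
        refine ⟨u, hu, Sym2.eq_iff.mpr (.inr ⟨Fin.ext ?_, rfl⟩)⟩
        rw [Fin.val_sub_one_of_ne_zero hu]; omega
    · rintro ⟨c, hc, he⟩
      have hc' := Fin.val_sub_one_of_ne_zero hc
      have hc0 : c.val ≠ 0 := Fin.val_ne_zero_iff.mpr hc
      rcases Sym2.eq_iff.mp he with ⟨rfl, rfl⟩ | ⟨rfl, rfl⟩ <;> omega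

lemma eq_zero_or_eq_of_mk_eq_cycleEdge {x y c : Fin n} {m : ℕ} (hx : x.val < m)
    (hy : m ≤ y.val) (h : s(x, y) = cycleEdge c) : c = 0 ∨ c = (m : Fin n) := by
  by_cases hc : c = 0
  · exact .inl hc
  right
  have hc' := Fin.val_sub_one_of_ne_zero hc
  have hc0 : c.val ≠ 0 := Fin.val_ne_zero_iff.mpr hc
  ext
  rw [Fin.val_natCast, Nat.mod_eq_of_lt (by omega)]
  rcases Sym2.eq_iff.mp h with ⟨rfl, rfl⟩ | ⟨rfl, rfl⟩ <;> omega

lemma natCast_mul_injOn {s : ℕ} (hs : s.Coprime n) :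
    Set.InjOn (fun m : ℕ => ((m * s : ℕ) : Fin n)) (Set.Iio n) := by
  intro a ha b hb h
  have hmod : a * s ≡ b * s [MOD n] := by
    simpa only [Nat.ModEq, Fin.val_natCast] using congrArg Fin.val h
  have := hmod.cancel_right_of_coprime (Nat.coprime_comm.mp hs)
  rwa [Nat.ModEq, Nat.mod_eq_of_lt ha, Nat.mod_eq_of_lt hb] at this

def pendingEdges (n : ℕ) [NeZero n] (s k : ℕ) : Set (Sym2 (Fin n)) :=
  {e | ∃ m, k < m ∧ m < n ∧ e = cycleEdge ((m * s : ℕ) : Fin n)}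

/-- The graph after the first `k` steps of the process that adds the cycle edges at
`s, 2s, 3s, …` in this order. -/
def saturationStage (n : ℕ) [NeZero n] (s k : ℕ) : SimpleGraph (Fin n) :=
  (⊤ : SimpleGraph (Fin n)).deleteEdges (pendingEdges n s k)

lemma pendingEdges_zero {s : ℕ} (hs : s.Coprime n) :
    pendingEdges n s 0 = (pathGraph n).edgeSet := by
  have hinj := natCast_mul_injOn hs
  have hcut0 : ((0 * s : ℕ) : Fin n) = 0 := by simp
  have hsurj : Function.Surjective fun m : Fin n => ((m.val * s : ℕ) : Fin n) :=
    Finite.surjective_of_injective fun a b h => Fin.ext (hinj a.isLt b.isLt h)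
  rw [edgeSet_pathGraph]
  ext e
  constructor
  · rintro ⟨m, hm0, hmn, rfl⟩
    refine ⟨_, fun h => ?_, rfl⟩
    have := hinj hmn (Nat.pos_of_neZero n) (h.trans hcut0.symm)
    omega
  · rintro ⟨c, hc, rfl⟩
    obtain ⟨m, rfl⟩ := hsurj c
    refine ⟨m, Nat.pos_of_ne_zero fun h => hc ?_, m.isLt, rfl⟩
    simp [h]

lemma pendingEdges_eq_empty (s : ℕ) : pendingEdges n s (n - 1) = ∅ :=
  Set.eq_empty_of_forall_notMem fun _ ⟨_, hkm, hmn, _⟩ => by omega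

lemma pendingEdges_eq_insert {s k : ℕ} (hk : k + 1 < n) :
    pendingEdges n s k =
      insert (cycleEdge (((k + 1) * s : ℕ) : Fin n)) (pendingEdges n s (k + 1)) := by
  ext e
  constructor
  · rintro ⟨m, hkm, hmn, rfl⟩
    rcases (Nat.succ_le_of_lt hkm).eq_or_lt with rfl | hlt
    · exact .inl rfl
    · exact .inr ⟨m, hlt, hmn, rfl⟩
  · rintro (rfl | ⟨m, hkm, hmn, rfl⟩)
    · exact ⟨k + 1, k.lt_succ_self, hk, rfl⟩
    · exact ⟨m, by omega, hmn, rfl⟩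

lemma saturationStage_zero {s : ℕ} (hs : s.Coprime n) :
    saturationStage n s 0 = (pathGraph n)ᶜ := by
  rw [saturationStage, pendingEdges_zero hs, deleteEdges_edgeSet, top_sdiff]

lemma saturationStage_last (s : ℕ) : saturationStage n s (n - 1) = ⊤ := by
  rw [saturationStage, pendingEdges_eq_empty, deleteEdges_empty]

end CyclicOrder

section SaturationStep

open Fin.NatCast Fin.CommRing

variable {s t : ℕ} [NeZero (s + t)]

def arcEmbedding (a : Fin (s + t)) : Fin s ⊕ Fin t ↪ Fin (s + t) :=
  (finSumFinEquiv.trans (Equiv.addLeft a)).toEmbedding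

/-- The arc `ks, …, (k + 1)s - 1` and its complement are separated only by the cycle edges at
`ks` and `(k + 1)s`, neither of which is still pending after step `k + 1`. -/
lemma arcEmbedding_mk_notMem_pendingEdges (hst : s.Coprime (s + t)) {k : ℕ} (i : Fin s)
    (j : Fin t) :
    s(arcEmbedding ((k * s : ℕ) : Fin (s + t)) (.inl i),
      arcEmbedding ((k * s : ℕ) : Fin (s + t)) (.inr j)) ∉ pendingEdges (s + t) s (k + 1) := by
  rintro ⟨m, hkm, hmn, he⟩
  simp only [arcEmbedding, Equiv.toEmbedding_apply, Equiv.trans_apply, finSumFinEquiv_apply_left,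
    finSumFinEquiv_apply_right, Equiv.coe_addLeft] at he
  rw [mk_add_eq_cycleEdge_iff] at he
  have hinj := natCast_mul_injOn hst
  rcases eq_zero_or_eq_of_mk_eq_cycleEdge (m := s) (by simp) (by simp) he with h | h
  · have := hinj hmn (by omega : k < s + t) (sub_eq_zero.mp h)
    omega
  · have := hinj hmn (by omega : k + 1 < s + t)
      (by dsimp only; rw [sub_eq_iff_eq_add.mp h]; push_cast; ring)
    omega

lemma cycleEdge_succ_mul_eq (hs : 0 < s) (ht : 0 < t) (k : ℕ) :
    cycleEdge (((k + 1) * s : ℕ) : Fin (s + t)) =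
      s(arcEmbedding ((k * s : ℕ) : Fin (s + t)) (.inl ⟨s - 1, by omega⟩),
        arcEmbedding ((k * s : ℕ) : Fin (s + t)) (.inr ⟨0, ht⟩)) := by
  have hl : Fin.castAdd t (⟨s - 1, by omega⟩ : Fin s) = (s : Fin (s + t)) - 1 := by
    rw [← Nat.cast_pred hs, ← Fin.cast_val_eq_self (Fin.castAdd t (⟨s - 1, by omega⟩ : Fin s)),
      Fin.val_castAdd]
  have hr : Fin.natAdd s (⟨0, ht⟩ : Fin t) = (s : Fin (s + t)) := by
    rw [← Fin.cast_val_eq_self (Fin.natAdd s (⟨0, ht⟩ : Fin t)), Fin.val_natAdd, add_zero]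
  simp only [arcEmbedding, Equiv.toEmbedding_apply, Equiv.trans_apply, finSumFinEquiv_apply_left,
    finSumFinEquiv_apply_right, Equiv.coe_addLeft, hl, hr, cycleEdge]
  push_cast
  ring_nf

lemma satStep_saturationStage (hs : 0 < s) (ht : 0 < t) (hst : s.Coprime (s + t)) {k : ℕ}
    (hk : k + 1 < s + t) :
    SatStep (Kst s t) (saturationStage (s + t) s k) (saturationStage (s + t) s (k + 1)) := by
  set f := arcEmbedding ((k * s : ℕ) : Fin (s + t))
  have hcross := arcEmbedding_mk_notMem_pendingEdges hst (k := k)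
  have hnew := cycleEdge_succ_mul_eq hs ht k
  have hne : f (.inl ⟨s - 1, by omega⟩) ≠ f (.inr ⟨0, ht⟩) := f.injective.ne Sum.inl_ne_inr
  refine ⟨_, ?_, ?_, f, ?_, .inl ⟨s - 1, by omega⟩, .inr ⟨0, ht⟩, by simp [Kst], hnew.symm⟩
  · rw [saturationStage, pendingEdges_eq_insert hk, hnew, mem_edgeSet, compl_adj, deleteEdges_adj]
    exact ⟨hne, fun h => h.2 (.inl rfl)⟩
  · rw [saturationStage, saturationStage, pendingEdges_eq_insert hk,
      deleteEdges_insert_sup_fromEdgeSet (by rw [hnew]; exact hne) (hnew ▸ hcross _ _)]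
  · have hadj : ∀ i j, (saturationStage (s + t) s (k + 1)).Adj (f (.inl i)) (f (.inr j)) :=
      fun i j => (deleteEdges_adj ..).mpr ⟨f.injective.ne Sum.inl_ne_inr, hcross i j⟩
    rintro (i | j) (i' | j') h
    · simp [Kst] at h
    · exact hadj i j'
    · exact (hadj i' j).symm
    · simp [Kst] at h

end SaturationStep

end SimpleGraph

theorem wsat_upper_bound_coprime (s t : ℕ) (hs : 0 < s) (ht : 0 < t)
    (hgcd : Nat.gcd s t = 1) :
    WeaklySat (Kst s t) (SimpleGraph.pathGraph (s + t))ᶜ ∧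
    wsat (s + t) (Kst s t) ≤ (s + t - 1).choose 2 := by
  have : NeZero (s + t) := ⟨by omega⟩
  have hst : s.Coprime (s + t) := by rwa [add_comm, Nat.coprime_add_self_right]
  have hreach : SatReaches (Kst s t) (pathGraph (s + t))ᶜ ⊤ := by
    have := satReaches_of_forall_satStep (H := saturationStage (s + t) s) (m := s + t - 1)
      fun k hk => satStep_saturationStage hs ht hst (by omega)
    rwa [saturationStage_zero hst, saturationStage_last] at this
  have hws : WeaklySat (Kst s t) (pathGraph (s + t))ᶜ :=
    ⟨not_hasCopy_kst_compl_of_preconnected (pathGraph_preconnected _) (Fintype.card_fin _) hs ht,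
      hreach⟩
  exact ⟨hws, Nat.sInf_le ⟨_, hws, ncard_edgeSet_compl_pathGraph _⟩⟩
end

section
/- Let F be a graph with minimum degree δ(F) ≥ 1 and let G be a weakly F-saturated graph with |V(G)| ≥ |V(F)| - 1. If a new vertex v is joined to δ(F) - 1 arbitrary vertices of G, the resulting graph is also weakly F-saturated. -/
/-!
A copy of `F` through the new vertex `v` would have to send a vertex of degree at least `δ(F)`
to `v`, which has only `δ(F) - 1` neighbours; so the new graph is `F`-free. The saturation
process of `G` runs unchanged in `G + v` and ends with `K_n` plus `v`. Then join `v` to the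
remaining vertices one at a time: when `v` already has at least `δ(F) - 1` neighbours and gains
`w`, send a minimum-degree vertex `a` of `F` to `v`, one neighbour of `a` to `w`, the others to
old neighbours of `v`, and the rest of `F` anywhere, which is possible as `|F| ≤ |G| + 1`.
-/

open SimpleGraph

/-- The graph obtained from `G` by adding a new vertex joined to the vertices in `S`. -/
def addVertex {V : Type*} (G : SimpleGraph V) (S : Set V) : SimpleGraph (Option V) where
  Adj a b :=
    match a, b with
    | some x, some y => G.Adj x y
    | some x, none => x ∈ S
    | none, some y => y ∈ S
    | none, none => False
  symm := by
    constructor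
    rintro (_ | x) (_ | y) h
    · exact h
    · exact h
    · exact h
    · exact G.adj_symm h
  loopless := by
    constructor
    rintro (_ | x) h
    · exact h
    · exact G.irrefl h

lemma Set.InjOn.exists_embedding_extend {α β : Type*} [Fintype α] [Fintype β]
    (hcard : Fintype.card α ≤ Fintype.card β) {s : Set α} {f : α → β} (hf : s.InjOn f) :
    ∃ g : α ↪ β, ∀ x ∈ s, g x = f x := by
  classical
  have himage : (s.toFinset.image f).card ≤ Fintype.card α :=
    Finset.card_image_le.trans (Finset.card_le_univ _)
  obtain ⟨t, hst, -, ht⟩ :=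
    Finset.exists_subsuperset_card_eq (Finset.subset_univ _) himage (by simpa using hcard)
  obtain ⟨g, hg⟩ := Set.MapsTo.exists_equiv_extend_of_card_eq ht.symm
    (fun x hx => hst (Finset.mem_image_of_mem f (Set.mem_toFinset.mpr hx))) hf
  exact ⟨g.toEmbedding.trans (Function.Embedding.subtype _), hg⟩

section AddVertex

variable {V : Type*}

@[simp] lemma addVertex_adj_some_some {G : SimpleGraph V} {S : Set V} {x y : V} :
    (addVertex G S).Adj (some x) (some y) ↔ G.Adj x y := Iff.rfl

@[simp] lemma addVertex_adj_none_some {G : SimpleGraph V} {S : Set V} {y : V} :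
    (addVertex G S).Adj none (some y) ↔ y ∈ S := Iff.rfl

@[simp] lemma addVertex_adj_some_none {G : SimpleGraph V} {S : Set V} {x : V} :
    (addVertex G S).Adj (some x) none ↔ x ∈ S := Iff.rfl

@[simp] lemma not_addVertex_adj_none_none {G : SimpleGraph V} {S : Set V} :
    ¬ (addVertex G S).Adj none none := id

def addVertexEmbedding (G : SimpleGraph V) (S : Set V) : G ↪g addVertex G S :=
  ⟨Function.Embedding.some, Iff.rfl⟩

lemma addVertex_sup_edge (G : SimpleGraph V) (S : Set V) (x y : V) :
    addVertex (G ⊔ fromEdgeSet {s(x, y)}) S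
      = addVertex G S ⊔ fromEdgeSet {s(some x, some y)} := by
  ext (_ | a) (_ | b) <;> simp [fromEdgeSet_adj]

lemma addVertex_insert (G : SimpleGraph V) (S : Set V) (w : V) :
    addVertex G (insert w S) = addVertex G S ⊔ fromEdgeSet {s(none, some w)} := by
  ext (_ | a) (_ | b) <;> simp [fromEdgeSet_adj, eq_comm, or_comm]

lemma addVertex_top_univ : addVertex (⊤ : SimpleGraph V) Set.univ = ⊤ := by
  ext (_ | a) (_ | b) <;> simp

lemma addVertex_top_adj_of_ne {S : Set V} {p q : Option V} (hpq : p ≠ q)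
    (hp : p ≠ none) (hq : q ≠ none) : (addVertex ⊤ S).Adj p q := by
  obtain ⟨x, rfl⟩ := Option.ne_none_iff_exists'.mp hp
  obtain ⟨y, rfl⟩ := Option.ne_none_iff_exists'.mp hq
  simpa using hpq

end AddVertex

section Saturation

variable {α β γ V : Type*} {F : SimpleGraph α}

lemma CopyAt.map {G : SimpleGraph β} {G' : SimpleGraph γ} {e : Sym2 β} (h : CopyAt F G e)
    (φ : G ↪g G') : CopyAt F G' (e.map φ) := by
  obtain ⟨f, hf, a, b, hab, rfl⟩ := h
  exact ⟨f.trans φ.toEmbedding, fun x y hxy => φ.map_rel_iff.mpr (hf x y hxy), a, b, hab, rfl⟩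

lemma SatStep.addVertex {H H' : SimpleGraph V} (h : SatStep F H H') (S : Set V) :
    SatStep F (addVertex H S) (addVertex H' S) := by
  obtain ⟨e, he, rfl, hcopy⟩ := h
  induction e using Sym2.ind with
  | h x y =>
    refine ⟨s(some x, some y), by simpa [compl_adj] using he, addVertex_sup_edge H S x y, ?_⟩
    exact hcopy.map (addVertexEmbedding _ S)

lemma SatReaches.addVertex {H H' : SimpleGraph V} (h : SatReaches F H H') (S : Set V) :
    SatReaches F (_root_.addVertex H S) (_root_.addVertex H' S) :=
  Relation.ReflTransGen.lift (_root_.addVertex · S) (fun _ _ hstep => hstep.addVertex S) _ _ h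

lemma satStep_addVertex_insert {G : SimpleGraph V} {S : Set V} {w : V} (hw : w ∉ S)
    (hcopy : CopyAt F (addVertex G (insert w S)) s(none, some w)) :
    SatStep F (addVertex G S) (addVertex G (insert w S)) :=
  ⟨s(none, some w), by simpa [compl_adj] using hw, addVertex_insert G S w, hcopy⟩

open Finset in
lemma copyAt_addVertex_top [Fintype α] [DecidableRel F.Adj] [Fintype V]
    (hcard : Fintype.card α ≤ Fintype.card V + 1) {a b : α} (hab : F.Adj a b)
    {U : Finset V} (hU : F.degree a ≤ #U) {w : V} (hw : w ∈ U) :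
    CopyAt F (addVertex ⊤ U) s(none, some w) := by
  classical
  set N := F.neighborFinset a
  have hbN : b ∈ N := by simpa [N] using hab
  obtain ⟨e, he⟩ : ∃ e : N ↪ U, e ⟨b, hbN⟩ = ⟨w, hw⟩ := by
    have hNU : Fintype.card N ≤ Fintype.card U := by
      rwa [Fintype.card_coe, Fintype.card_coe, card_neighborFinset_eq_degree]
    obtain ⟨e, he⟩ := (Set.injOn_singleton (fun _ => (⟨w, hw⟩ : U)) (⟨b, hbN⟩ : N))
      |>.exists_embedding_extend hNU
    exact ⟨e, he _ rfl⟩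
  set φ : α → Option V := fun x => if hx : x ∈ N then some (e ⟨x, hx⟩) else none
  have hφ : Set.InjOn φ (insert a N : Finset α) := by
    intro x hx y hy hxy
    simp only [φ] at hxy
    split_ifs at hxy with hxN hyN
    · simpa using e.injective (Subtype.ext (Option.some_injective _ hxy))
    · simp_all
  obtain ⟨f, hf⟩ := hφ.exists_embedding_extend (by simpa using hcard)
  have hfa : f a = none := by simp [hf a (by simp), φ, N]
  have hfN : ∀ y ∈ N, ∃ u ∈ U, f y = some u := fun y hy =>
    ⟨e ⟨y, hy⟩, (e ⟨y, hy⟩).2, by simp [hf y (by simp [hy]), φ, hy]⟩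
  have hadj_a : ∀ y, F.Adj a y → (addVertex ⊤ (U : Set V)).Adj (f a) (f y) := by
    intro y hy
    obtain ⟨u, hu, hfy⟩ := hfN y (by simpa [N] using hy)
    simpa [hfa, hfy] using hu
  refine ⟨f, fun x y hxy => ?_, a, b, hab, ?_⟩
  · by_cases hxa : x = a
    · exact hxa ▸ hadj_a y (hxa ▸ hxy)
    by_cases hya : y = a
    · exact hya ▸ (hadj_a x (hya ▸ hxy.symm)).symm
    exact addVertex_top_adj_of_ne (f.injective.ne hxy.ne)
      (hfa ▸ f.injective.ne hxa) (hfa ▸ f.injective.ne hya)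
  · simp [hfa, hf b (by simp [hbN]), φ, hbN, he]

open Finset in
lemma not_hasCopy_addVertex [Fintype α] [DecidableRel F.Adj] {G : SimpleGraph V}
    (hG : ¬ HasCopy F G) {S : Finset V} (hS : #S < F.minDegree) :
    ¬ HasCopy F (addVertex G S) := by
  rintro ⟨f, hf⟩
  by_cases hnone : ∃ a, f a = none
  · obtain ⟨a, ha⟩ := hnone
    have hdeg : F.degree a ≤ #(S.map Function.Embedding.some) := by
      rw [← card_neighborFinset_eq_degree]
      refine card_le_card_of_injOn f (fun y hy => ?_) f.injective.injOn
      have hadj := hf a y (by simpa using hy)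
      rw [ha] at hadj
      obtain ⟨v, hv⟩ : ∃ v, f y = some v := Option.ne_none_iff_exists'.mp fun h =>
        not_addVertex_adj_none_none (h ▸ hadj)
      simpa [hv] using hadj
    rw [card_map] at hdeg
    exact (hS.trans_le (F.minDegree_le_degree a)).not_ge hdeg
  · push Not at hnone
    choose g hg using fun a => Option.ne_none_iff_exists'.mp (hnone a)
    exact hG ⟨⟨g, fun x y h => f.injective (by rw [hg, hg, h])⟩,
      fun x y hxy => show G.Adj (g x) (g y) by simpa [hg] using hf x y hxy⟩

open Finset in
lemma satReaches_addVertex_top_union [Fintype α] [DecidableRel F.Adj] [Fintype V]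
    [DecidableEq V] (hcard : Fintype.card α ≤ Fintype.card V + 1) {a b : α} (hab : F.Adj a b)
    {T : Finset V} (hT : F.degree a ≤ #T + 1) (C : Finset V) :
    SatReaches F (addVertex ⊤ T) (addVertex ⊤ (↑(C ∪ T) : Set V)) := by
  induction C using Finset.induction_on with
  | empty => rw [empty_union]; exact Relation.ReflTransGen.refl
  | insert w C _ ih =>
    rw [insert_union]
    by_cases hw : w ∈ C ∪ T
    · rwa [insert_eq_of_mem hw]
    have hdeg : F.degree a ≤ #(insert w (C ∪ T)) := by
      rw [card_insert_of_notMem hw]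
      exact hT.trans (by gcongr; exact subset_union_right)
    refine ih.tail ?_
    rw [coe_insert]
    exact satStep_addVertex_insert (by simpa using hw)
      (by simpa using copyAt_addVertex_top hcard hab hdeg (mem_insert_self w _))

end Saturation

theorem weaklySat_addVertex {α V : Type*} [Fintype α] [Nonempty α] [Fintype V]
    (F : SimpleGraph α) [DecidableRel F.Adj]
    (hδ : 1 ≤ F.minDegree)
    (G : SimpleGraph V) (hcard : Fintype.card α - 1 ≤ Fintype.card V)
    (S : Finset V) (hS : S.card = F.minDegree - 1)
    (hG : WeaklySat F G) :
    WeaklySat F (addVertex G (S : Set V)) := by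
  classical
  refine ⟨not_hasCopy_addVertex hG.1 (by omega), ?_⟩
  obtain ⟨a, ha⟩ := F.exists_minimal_degree_vertex
  obtain ⟨b, hab⟩ := (F.degree_pos_iff_exists_adj a).mp (by omega)
  have hreach := satReaches_addVertex_top_union (by omega) hab (T := S) (by omega) Finset.univ
  simp only [Finset.coe_union, Finset.coe_univ, Set.univ_union, addVertex_top_univ] at hreach
  exact (hG.2.addVertex S).trans hreach
end

section
/- For every two integers n, t with t ≥ 3 even and t+2 ≤ n ≤ 2t-2, wsat(n, K_{2,t}) ≤ n - 1 + C(t,2). -/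
open SimpleGraph

/-!
The witness is a cone over a clique: a vertex `c` joined to every other vertex, together with
all edges inside a `t`-set `A ∌ c`; it has `(n - 1) + C(t, 2)` edges. Two distinct vertices
of it have at most `t - 1` common neighbours, so it contains no `K_{2,t}`. Conversely, in any
supergraph `K` a missing edge `uv` completes a `K_{2,t}` with centres `u`, `c` and leaves `v`
plus `t - 1` neighbours of `u` other than `c`: such neighbours exist when `u ∈ A`, and once
every edge at `A` is present, for every `u` outside `A`.
-/

open Finset

variable {V α : Type*}

theorem hasCopy_iff_isContained {F : SimpleGraph α} {G : SimpleGraph V} :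
    HasCopy F G ↔ F ⊑ G :=
  ⟨fun ⟨f, hf⟩ => ⟨⟨⟨f, hf _ _⟩, f.injective⟩⟩,
    fun ⟨f⟩ => ⟨⟨f, f.injective⟩, fun _ _ h => f.toHom.map_adj h⟩⟩

theorem exists_common_neighbors_of_hasCopy_Kst {G : SimpleGraph V} {t : ℕ}
    (h : HasCopy (Kst 2 t) G) :
    ∃ p q, p ≠ q ∧ ∃ R : Finset V, #R = t ∧ ∀ r ∈ R, G.Adj p r ∧ G.Adj q r := by
  classical
  rw [hasCopy_iff_isContained, Kst, completeBipartiteGraph_isContained_iff] at h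
  obtain ⟨L, R, hL, hR, hLR⟩ := h
  obtain ⟨p, q, hpq, rfl⟩ := card_eq_two.mp (by simpa using hL)
  exact ⟨p, q, hpq, R, by simpa using hR, fun r hr => ⟨hLR (by simp) hr, hLR (by simp) hr⟩⟩

theorem copyAt_completeBipartiteGraph {β : Type*} [Fintype α] [Fintype β] {H : SimpleGraph V}
    {L R : Finset V} (hL : #L = Fintype.card α) (hR : #R = Fintype.card β)
    (hLR : H.IsCompleteBetween L R) {p z : V} (hp : p ∈ L) (hz : z ∈ R) :
    CopyAt (completeBipartiteGraph α β) H s(p, z) := by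
  let eL : α ≃ L := Fintype.equivOfCardEq (by simp [hL])
  let eR : β ≃ R := Fintype.equivOfCardEq (by simp [hR])
  have adj (a : α) (b : β) : H.Adj (eL a) (eR b) := hLR (eL a).2 (eR b).2
  have inj : (Sum.elim (fun a => (eL a : V)) (fun b => eR b)).Injective :=
    (Subtype.val_injective.comp eL.injective).sumElim
      (Subtype.val_injective.comp eR.injective) fun a b => (adj a b).ne
  refine ⟨⟨_, inj⟩, ?_, Sum.inl (eL.symm ⟨p, hp⟩), Sum.inr (eR.symm ⟨z, hz⟩), by simp,
    by simp⟩
  rintro (a | a) (b | b) hab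
  · simp at hab
  · exact adj a b
  · exact (adj b a).symm
  · simp at hab

theorem SatStep.lt {F : SimpleGraph α} {H H' : SimpleGraph V} (h : SatStep F H H') : H < H' := by
  obtain ⟨e, he, rfl, -⟩ := h
  induction e using Sym2.ind with
  | _ x y =>
    rw [mem_edgeSet, compl_adj] at he
    exact left_lt_sup.2 fun hle => he.2 (hle (by simpa using he.1))

theorem satReaches_top_of_forall_exists_satStep [Finite V] {F : SimpleGraph α}
    {G : SimpleGraph V} (h : ∀ K, G ≤ K → K ≠ ⊤ → ∃ K', SatStep F K K') :
    SatReaches F G ⊤ := by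
  suffices ∀ K, G ≤ K → SatReaches F K ⊤ from this G le_rfl
  intro K
  induction K using WellFoundedGT.induction with
  | _ K ih =>
    intro hGK
    by_cases hK : K = ⊤
    · exact hK ▸ Relation.ReflTransGen.refl
    obtain ⟨K', hK'⟩ := h K hGK hK
    exact .head hK' (ih K' hK'.lt (hGK.trans hK'.lt.le))

theorem satStep_Kst_sup_edge {K : SimpleGraph V} {c u v : V} {t : ℕ}
    (hc : ∀ x, x ≠ c → K.Adj c x) (huv : u ≠ v) (hK : ¬ K.Adj u v)
    {B : Finset V} (hB : #B + 1 = t) (hcB : c ∉ B) (hBu : ∀ b ∈ B, K.Adj u b) :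
    SatStep (Kst 2 t) K (K ⊔ fromEdgeSet {s(u, v)}) := by
  classical
  have hvc : v ≠ c := fun h => hK (h ▸ (hc u (h ▸ huv)).symm)
  have huc : u ≠ c := fun h => hK (h ▸ hc v hvc)
  have hvB : v ∉ B := fun h => hK (hBu v h)
  refine ⟨s(u, v), by simpa using ⟨huv, hK⟩, rfl, ?_⟩
  refine copyAt_completeBipartiteGraph (L := {u, c}) (R := insert v B) (by simp [huc])
    (by simp [card_insert_of_notMem hvB, hB]) ?_ (by simp) (by simp)
  intro l hl r hr
  simp only [coe_insert, coe_singleton, Set.mem_insert_iff, Set.mem_singleton_iff,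
    mem_coe] at hl hr
  rcases hl with rfl | rfl <;> rcases hr with rfl | hr
  · simp [huv]
  · exact Or.inl (hBu r hr)
  · exact Or.inl (hc _ hvc)
  · exact Or.inl (hc r fun h => hcB (h ▸ hr))

def coneOverClique (c : V) (A : Finset V) : SimpleGraph V where
  Adj x y := x ≠ y ∧ (x = c ∨ y = c ∨ x ∈ A ∧ y ∈ A)
  symm := ⟨fun _ _ h => ⟨h.1.symm, by tauto⟩⟩
  loopless := ⟨fun _ h => h.1 rfl⟩

section coneOverClique

variable {c : V} {A : Finset V}

@[simp]
theorem coneOverClique_adj {x y : V} :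
    (coneOverClique c A).Adj x y ↔ x ≠ y ∧ (x = c ∨ y = c ∨ x ∈ A ∧ y ∈ A) :=
  Iff.rfl

theorem subset_singleton_of_forall_coneOverClique_adj {x : V} {R : Finset V} (hxc : x ≠ c)
    (hxA : x ∉ A) (hR : ∀ r ∈ R, (coneOverClique c A).Adj x r) : R ⊆ {c} := by
  intro r hr
  obtain ⟨-, h⟩ := hR r hr
  rw [mem_singleton]
  tauto

theorem coneOverClique_Kst_free (hcA : c ∉ A) (hA : 2 ≤ #A) :
    ¬ HasCopy (Kst 2 #A) (coneOverClique c A) := by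
  classical
  intro h
  obtain ⟨p, q, hpq, R, hR, hadj⟩ := exists_common_neighbors_of_hasCopy_Kst h
  wlog hpc : p ≠ c generalizing p q
  · refine this q p hpq.symm (fun r hr => (hadj r hr).symm) ?_
    rintro rfl
    exact hpq (not_not.mp hpc)
  have h_outside {x : V} (hxc : x ≠ c) (hxA : x ∉ A)
      (hx : ∀ r ∈ R, (coneOverClique c A).Adj x r) : False := by
    have := card_le_card (subset_singleton_of_forall_coneOverClique_adj hxc hxA hx)
    simp only [card_singleton] at this
    omega
  by_cases hpA : p ∉ A
  · exact h_outside hpc hpA fun r hr => (hadj r hr).1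
  have hq : q = c ∨ q ∈ A := by
    by_contra! hq
    exact h_outside hq.1 hq.2 fun r hr => (hadj r hr).2
  have hsub : R ⊆ ((insert c A).erase p).erase q := by
    intro r hr
    obtain ⟨⟨hpr, hpr'⟩, hqr, -⟩ := hadj r hr
    simp only [mem_erase, mem_insert]
    refine ⟨hqr.symm, hpr.symm, ?_⟩
    tauto
  have := card_le_card hsub
  rw [card_erase_of_mem (mem_erase.2 ⟨hpq.symm, mem_insert.2 hq⟩),
    card_erase_of_mem (mem_insert_of_mem (not_not.mp hpA)), card_insert_of_notMem hcA] at this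
  omega

theorem exists_satStep_of_coneOverClique_le {K : SimpleGraph V} (hcA : c ∉ A)
    (hA : A.Nonempty) (hK : coneOverClique c A ≤ K) (hKtop : K ≠ ⊤) :
    ∃ K', SatStep (Kst 2 #A) K K' := by
  classical
  have hc (x : V) (hx : x ≠ c) : K.Adj c x := hK ⟨hx.symm, Or.inl rfl⟩
  have hA_adj {a b : V} (ha : a ∈ A) (hb : b ∈ A) (hab : a ≠ b) : K.Adj a b :=
    hK ⟨hab, Or.inr (Or.inr ⟨ha, hb⟩)⟩
  obtain ⟨u, v, huv, hKuv⟩ : ∃ u v, u ≠ v ∧ ¬ K.Adj u v := by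
    by_contra! h
    exact hKtop (eq_top_iff.2 fun x y hxy => h x y hxy)
  have hcB (a : V) : c ∉ A.erase a := fun h => hcA (mem_of_mem_erase h)
  by_cases hmiss : ∃ a ∈ A, ∃ x, a ≠ x ∧ ¬ K.Adj a x
  · obtain ⟨a, ha, x, hax, hKax⟩ := hmiss
    exact ⟨_, satStep_Kst_sup_edge hc hax hKax (card_erase_add_one ha) (hcB a)
      fun b hb => hA_adj ha (mem_of_mem_erase hb) (ne_of_mem_erase hb).symm⟩
  · push Not at hmiss
    obtain ⟨a, ha⟩ := hA
    have huA : u ∉ A := fun hu => hKuv (hmiss u hu v huv)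
    have hu_adj {b : V} (hb : b ∈ A) : K.Adj u b := (hmiss b hb u fun h => huA (h ▸ hb)).symm
    exact ⟨_, satStep_Kst_sup_edge hc huv hKuv (card_erase_add_one ha) (hcB a)
      fun b hb => hu_adj (mem_of_mem_erase hb)⟩

theorem satReaches_coneOverClique_top [Finite V] (hcA : c ∉ A) (hA : A.Nonempty) :
    SatReaches (Kst 2 #A) (coneOverClique c A) ⊤ :=
  satReaches_top_of_forall_exists_satStep fun _ hK hKtop =>
    exists_satStep_of_coneOverClique_le hcA hA hK hKtop

theorem ncard_edgeSet_coneOverClique_le [Fintype V] :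
    (coneOverClique c A).edgeSet.ncard ≤ Fintype.card V - 1 + (#A).choose 2 := by
  classical
  let clique : SimpleGraph V := (⊤ : SimpleGraph A).map (Function.Embedding.subtype _)
  have hsub : (coneOverClique c A).edgeFinset ⊆
      (⊤ : SimpleGraph V).incidenceFinset c ∪ clique.edgeFinset := by
    intro e he
    induction e using Sym2.ind with
    | _ x y =>
      simp only [mem_edgeFinset, mem_edgeSet, coneOverClique_adj] at he
      simp only [mem_union, mem_incidenceFinset, incidenceSet, mem_edgeFinset, clique]
      simp only [Set.mem_ofPred_eq, mem_edgeSet, top_adj, Sym2.mem_iff, map_adj]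
      obtain ⟨hxy, rfl | rfl | ⟨hx, hy⟩⟩ := he
      · exact Or.inl ⟨hxy, Or.inl rfl⟩
      · exact Or.inl ⟨hxy, Or.inr rfl⟩
      · exact Or.inr ⟨⟨x, hx⟩, ⟨y, hy⟩, by simpa using hxy, rfl, rfl⟩
  calc (coneOverClique c A).edgeSet.ncard = #(coneOverClique c A).edgeFinset := by
        rw [← coe_edgeFinset, Set.ncard_coe_finset]
    _ ≤ #((⊤ : SimpleGraph V).incidenceFinset c) + #clique.edgeFinset :=
        (card_le_card hsub).trans (card_union_le _ _)
    _ = Fintype.card V - 1 + (#A).choose 2 := by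
        rw [card_incidenceFinset_eq_degree, complete_graph_degree, card_edgeFinset_map,
          card_edgeFinset_top_eq_card_choose_two, Fintype.card_coe]

end coneOverClique

theorem wsat_K2t_upper_even_small_general (n t : ℕ) (ht : 3 ≤ t)
    (hn1 : t + 2 ≤ n) :
    wsat n (Kst 2 t) ≤ n - 1 + t.choose 2 := by
  let c : Fin n := ⟨0, by omega⟩
  obtain ⟨A, hAc, rfl⟩ := exists_subset_card_eq (s := univ.erase c) (n := t) (by simp; omega)
  have hcA : c ∉ A := fun h => by simpa using hAc h
  have hws : WeaklySat (Kst 2 #A) (coneOverClique c A) :=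
    ⟨coneOverClique_Kst_free hcA (by omega),
      satReaches_coneOverClique_top hcA (card_pos.mp (by omega))⟩
  calc wsat n (Kst 2 #A) ≤ (coneOverClique c A).edgeSet.ncard := Nat.sInf_le ⟨_, hws, rfl⟩
    _ ≤ n - 1 + (#A).choose 2 := by
        simpa using ncard_edgeSet_coneOverClique_le (c := c) (A := A)

theorem wsat_K2t_upper_even_small (n t : ℕ) (ht : 3 ≤ t) (hte : Even t)
    (hn1 : t + 2 ≤ n) (hn2 : n ≤ 2 * t - 2) :
    wsat n (Kst 2 t) ≤ n - 1 + t.choose 2 :=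
  wsat_K2t_upper_even_small_general n t ht hn1
end

section
/- No bipartite graph on n ≥ t+2 vertices is weakly K_{2,t}-saturated for t ≥ 2. -/
open SimpleGraph

/-
A saturation step adds an edge `uv` only if it lies in a copy of `F`; when every edge of `F` lies
on a `4`-cycle, the three other edges of such a cycle through `uv` are old edges forming a
`u`–`v` path of length `3`. In a properly `2`-coloured graph the ends of an odd path get different
colours, so a proper `2`-colouring of `G` stays proper along the whole process. The complete
graph on at least three vertices has no proper `2`-colouring.
-/

lemma Fin.two_ne_of_ne_of_ne_of_ne {w x y z : Fin 2} (hwx : w ≠ x) (hxy : x ≠ y) (hyz : y ≠ z) :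
    w ≠ z := by
  revert w x y z; decide

namespace SimpleGraph

variable {α V : Type*}

/-- The cycle is `a d c b`; the inequalities make its other three edges differ from `ab`. -/
def EdgesOnFourCycles (F : SimpleGraph α) : Prop :=
  ∀ ⦃a b⦄, F.Adj a b → ∃ c d, c ≠ a ∧ d ≠ b ∧ F.Adj a d ∧ F.Adj d c ∧ F.Adj c b

lemma edgesOnFourCycles_completeBipartiteGraph {β : Type*} [Nontrivial α] [Nontrivial β] :
    (completeBipartiteGraph α β).EdgesOnFourCycles := by
  rintro (a | a) (b | b) hab <;> simp at hab
  · obtain ⟨a', ha'⟩ := exists_ne a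
    obtain ⟨b', hb'⟩ := exists_ne b
    exact ⟨.inl a', .inr b', by simpa, by simpa, by simp, by simp, by simp⟩
  · obtain ⟨a', ha'⟩ := exists_ne a
    obtain ⟨b', hb'⟩ := exists_ne b
    exact ⟨.inr a', .inl b', by simpa, by simpa, by simp, by simp, by simp⟩

lemma edgesOnFourCycles_Kst {s t : ℕ} (hs : 2 ≤ s) (ht : 2 ≤ t) : (Kst s t).EdgesOnFourCycles :=
  have := Fin.nontrivial_iff_two_le.mpr hs
  have := Fin.nontrivial_iff_two_le.mpr ht
  edgesOnFourCycles_completeBipartiteGraph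

lemma adj_of_copy_sup_edge {F : SimpleGraph α} {H : SimpleGraph V} {e : Sym2 V} {f : α ↪ V}
    (hf : ∀ a b, F.Adj a b → (H ⊔ fromEdgeSet {e}).Adj (f a) (f b)) {a b x y : α}
    (he : s(f a, f b) = e) (hxy : F.Adj x y) (hne : s(x, y) ≠ s(a, b)) : H.Adj (f x) (f y) := by
  refine (sup_adj _ _ _ _).mp (hf x y hxy) |>.resolve_right fun hnew => hne ?_
  rw [fromEdgeSet_adj, Set.mem_singleton_iff, ← he] at hnew
  exact Sym2.map.injective f.injective (by simpa using hnew.1)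

lemma SatStep.colorable_two {F : SimpleGraph α} (hF : F.EdgesOnFourCycles)
    {H H' : SimpleGraph V} (hstep : SatStep F H H') (hH : H.Colorable 2) : H'.Colorable 2 := by
  obtain ⟨C⟩ := hH
  obtain ⟨e, -, rfl, f, hf, a, b, hab, he⟩ := hstep
  obtain ⟨c, d, hca, hdb, had, hdc, hcb⟩ := hF hab
  have old {x y} (hxy : F.Adj x y) (hne : s(x, y) ≠ s(a, b)) : C (f x) ≠ C (f y) :=
    C.valid (adj_of_copy_sup_edge hf he hxy hne)
  have hnew : C (f a) ≠ C (f b) := Fin.two_ne_of_ne_of_ne_of_ne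
    (old had (by simp [hdb, had.ne']))
    (old hdc (by simp [hdb, had.ne']))
    (old hcb (by simp [hca, hcb.ne]))
  refine ⟨Coloring.mk C fun {u v} huv => ?_⟩
  rcases (sup_adj _ _ _ _).mp huv with hold | hadd
  · exact C.valid hold
  · rw [fromEdgeSet_adj, Set.mem_singleton_iff, ← he, Sym2.eq_iff] at hadd
    rcases hadd.1 with ⟨rfl, rfl⟩ | ⟨rfl, rfl⟩
    · exact hnew
    · exact hnew.symm

lemma SatReaches.colorable_two {F : SimpleGraph α} (hF : F.EdgesOnFourCycles)
    {G H : SimpleGraph V} (hreach : SatReaches F G H) (hG : G.Colorable 2) : H.Colorable 2 := by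
  induction hreach with
  | refl => exact hG
  | tail _ hstep ih => exact hstep.colorable_two hF ih

lemma card_le_of_colorable_top [Fintype V] {n : ℕ} (h : (⊤ : SimpleGraph V).Colorable n) :
    Fintype.card V ≤ n := by
  obtain ⟨C⟩ := h
  simpa using Fintype.card_le_of_injective _ C.injective_of_top_hom

end SimpleGraph

theorem not_weaklySat_of_bipartite {V : Type*} [Fintype V] (t : ℕ) (ht : 2 ≤ t)
    (hcard : t + 2 ≤ Fintype.card V)
    (G : SimpleGraph V) (hbip : G.Colorable 2) :
    ¬ WeaklySat (Kst 2 t) G := by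
  rintro ⟨-, hreach⟩
  have := card_le_of_colorable_top <|
    hreach.colorable_two (edgesOnFourCycles_Kst le_rfl ht) hbip
  omega
end

section
/- Let t ≥ 2 and let G be a connected graph on n ≥ t+2 vertices containing a clique on t+1 vertices, such that every vertex outside some fixed (t+1)-clique can be ordered v_1, ..., v_k so that each v_i has at least one neighbor among the clique and v_1, ..., v_{i-1}. Then the complete graph K_n can be reached from G by adding edges one at a time, each creating a new copy of K_{2,t}. -/
open SimpleGraph

lemma satStep_clique {V : Type*} {t : ℕ} (ht : 2 ≤ t)
    {H : SimpleGraph V} {C : Finset V} (hclique : H.IsClique (C : Set V))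
    (hC : t + 1 ≤ C.card) {v u w : V} (hv : v ∉ C) (hu : u ∈ C) (hw : w ∈ C)
    (huw : u ≠ w) (hadj : H.Adj v u) (hnadj : ¬ H.Adj v w) :
    SatStep (Kst 2 t) H (H ⊔ SimpleGraph.fromEdgeSet {s(v,w)}) := by
  classical
  have hvu : v ≠ u := hadj.ne
  have hvw : v ≠ w := fun h => hv (h ▸ hw)
  set H' := H ⊔ SimpleGraph.fromEdgeSet {s(v,w)} with hH'
  have hle : H ≤ H' := le_sup_left
  have hadj' : H'.Adj v w := by
    have h0 : (SimpleGraph.fromEdgeSet {s(v,w)}).Adj v w := by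
      simp [SimpleGraph.fromEdgeSet_adj, hvw]
    exact (le_sup_right : SimpleGraph.fromEdgeSet {s(v,w)} ≤ H') h0
  obtain ⟨D, hDsub, hDcard⟩ : ∃ D ⊆ C \ {u, w}, D.card = t - 1 := by
    apply Finset.exists_subset_card_eq
    have h2 : ({u, w} : Finset V).card ≤ 2 := by
      apply le_trans (Finset.card_insert_le _ _); simp
    have := Finset.le_card_sdiff ({u, w} : Finset V) C
    omega
  have hDmem : ∀ x ∈ D, x ∈ C ∧ x ≠ u ∧ x ≠ w := by
    intro x hx
    have := hDsub hx
    simp only [Finset.mem_sdiff, Finset.mem_insert, Finset.mem_singleton] at this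
    tauto
  have hvD : v ∉ D := fun h => hv (hDmem v h).1
  let g : Fin (t - 1) ≃ D := (D.equivFinOfCardEq hDcard).symm
  let f : Fin 2 ⊕ Fin t → V := fun x =>
    match x with
    | .inl i => if i = (0 : Fin 2) then u else w
    | .inr j => if h : (j : ℕ) = 0 then v
        else (g ⟨(j : ℕ) - 1, by have := j.isLt; omega⟩ : V)
  have hfr : ∀ j : Fin t, f (.inr j) = v ∨ f (.inr j) ∈ D := by
    intro j
    by_cases h : (j : ℕ) = 0
    · left; simp [f, h]
    · right; simp only [f, dif_neg h]; exact (g _).2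
  have hfl : ∀ i : Fin 2, f (.inl i) = u ∨ f (.inl i) = w := by
    intro i; by_cases h : i = 0 <;> simp [f, h]
  have hflC : ∀ i : Fin 2, f (.inl i) ∈ C := by
    intro i; rcases hfl i with h | h <;> rw [h] <;> assumption
  have hlr : ∀ (i : Fin 2) (j : Fin t), f (.inl i) ≠ f (.inr j) := by
    intro i j hxy
    rcases hfr j with h' | h'
    · rw [h'] at hxy; exact hv (hxy ▸ hflC i)
    · have hd := hDmem _ h'
      rcases hfl i with h | h <;> rw [h] at hxy
      · exact hd.2.1 hxy.symm
      · exact hd.2.2 hxy.symm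
  have hinj : Function.Injective f := by
    intro x y hxy
    match x, y with
    | .inl i, .inl i' =>
      by_cases h : i = 0 <;> by_cases h' : i' = 0
      · rw [h, h']
      · simp only [f, if_pos h, if_neg h'] at hxy; exact absurd hxy huw
      · simp only [f, if_neg h, if_pos h'] at hxy; exact absurd hxy.symm huw
      · have h₁ : (i : ℕ) ≠ 0 := fun e => h (Fin.ext e)
        have h₂ : (i' : ℕ) ≠ 0 := fun e => h' (Fin.ext e)
        have := i.isLt; have := i'.isLt
        congr 1; exact Fin.ext (by omega)
    | .inl i, .inr j => exact absurd hxy (hlr i j)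
    | .inr j, .inl i => exact absurd hxy.symm (hlr i j)
    | .inr j, .inr j' =>
      by_cases h : (j : ℕ) = 0 <;> by_cases h' : (j' : ℕ) = 0
      · congr 1; exact Fin.ext (h.trans h'.symm)
      · simp only [f, dif_pos h, dif_neg h'] at hxy
        exact absurd (hxy ▸ (g _).2) hvD
      · simp only [f, dif_neg h, dif_pos h'] at hxy
        exact absurd (hxy ▸ (g _).2 : v ∈ D) hvD
      · simp only [f, dif_neg h, dif_neg h'] at hxy
        have h2 := congrArg (fun x : Fin (t-1) => (x : ℕ)) (g.injective (Subtype.ext hxy))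
        simp only at h2
        have := j.isLt; have := j'.isLt
        congr 1; exact Fin.ext (by omega)
  have hadjlr : ∀ (i : Fin 2) (j : Fin t), H'.Adj (f (.inl i)) (f (.inr j)) := by
    intro i j
    rcases hfr j with h' | h'
    · rw [h']
      rcases hfl i with h | h <;> rw [h]
      · exact hle hadj.symm
      · exact hadj'.symm
    · have hd := hDmem _ h'
      exact hle (hclique (hflC i) hd.1 (hlr i j))
  refine ⟨s(v, w), ?_, rfl, ⟨⟨f, hinj⟩, ?_, ?_⟩⟩
  · rw [SimpleGraph.mem_edgeSet, SimpleGraph.compl_adj]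
    exact ⟨hvw, hnadj⟩
  · intro a b hab
    rcases a with i | j <;> rcases b with i' | j'
    · simp [Kst] at hab
    · exact hadjlr i j'
    · exact (hadjlr i' j).symm
    · simp [Kst] at hab
  · refine ⟨.inl 1, .inr ⟨0, by omega⟩, ?_, ?_⟩
    · simp [Kst]
    · have h1 : f (.inl 1) = w := by simp [f]
      have h2 : f (.inr ⟨0, by omega⟩) = v := by simp [f]
      rw [show ((⟨f, hinj⟩ : _ ↪ V) (.inl 1)) = f (.inl 1) from rfl,
        show ((⟨f, hinj⟩ : _ ↪ V) (.inr ⟨0, by omega⟩)) = f (.inr ⟨0, by omega⟩) from rfl,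
        h1, h2, Sym2.eq_swap]

lemma grow_clique {V : Type*} {t : ℕ} (ht : 2 ≤ t)
    {H : SimpleGraph V} {C : Finset V} (hclique : H.IsClique (C : Set V))
    (hC : t + 1 ≤ C.card) {v u : V} (hv : v ∉ C) (hu : u ∈ C) (hadj : H.Adj v u) :
    ∃ H', SatReaches (Kst 2 t) H H' ∧ H ≤ H' ∧ ∀ w ∈ C, H'.Adj v w := by
  classical
  generalize hn : (C.filter (fun w => ¬ H.Adj v w)).card = n
  induction n generalizing H with
  | zero =>
    refine ⟨H, Relation.ReflTransGen.refl, le_refl _, ?_⟩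
    intro w hw
    by_contra hcon
    have : w ∈ C.filter (fun w => ¬ H.Adj v w) := Finset.mem_filter.mpr ⟨hw, hcon⟩
    rw [Finset.card_eq_zero.mp hn] at this
    exact absurd this (Finset.notMem_empty w)
  | succ n ih =>
    obtain ⟨w, hwmem⟩ : (C.filter (fun w => ¬ H.Adj v w)).Nonempty := by
      apply Finset.card_pos.mp; omega
    obtain ⟨hwC, hwn⟩ := Finset.mem_filter.mp hwmem
    have huw : u ≠ w := fun h => hwn (h ▸ hadj)
    have hvw : v ≠ w := fun h => hv (h ▸ hwC)
    set H1 := H ⊔ SimpleGraph.fromEdgeSet {s(v, w)} with hH1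
    have hstep : SatStep (Kst 2 t) H H1 :=
      satStep_clique ht hclique hC hv hu hwC huw hadj hwn
    have hle : H ≤ H1 := le_sup_left
    have hadj1vw : H1.Adj v w := by
      have h0 : (SimpleGraph.fromEdgeSet {s(v,w)}).Adj v w := by
        simp [SimpleGraph.fromEdgeSet_adj, hvw]
      exact (le_sup_right : SimpleGraph.fromEdgeSet {s(v,w)} ≤ H1) h0
    clear_value H1
    have hadjiff : ∀ x ∈ C, (H1.Adj v x ↔ H.Adj v x ∨ x = w) := by
      intro x hx
      constructor
      · intro h1
        rw [hH1] at h1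
        rcases (sup_adj _ _ _ _).mp h1 with h | h
        · exact Or.inl h
        · rw [SimpleGraph.fromEdgeSet_adj] at h
          have := h.1
          simp only [Set.mem_singleton_iff, Sym2.eq, Sym2.rel_iff', Prod.mk.injEq,
            Prod.swap_prod_mk] at this
          rcases this with ⟨_, h2⟩ | ⟨h2, h3⟩
          · exact Or.inr h2
          · exact absurd (h3 ▸ hx) hv
      · rintro (h | rfl)
        · exact hle h
        · exact hadj1vw
    have hfil : C.filter (fun x => ¬ H1.Adj v x)
        = (C.filter (fun x => ¬ H.Adj v x)).erase w := by
      ext x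
      simp only [Finset.mem_erase, Finset.mem_filter]
      constructor
      · intro ⟨hx, hnx⟩
        have := hadjiff x hx
        refine ⟨fun e => hnx (this.mpr (Or.inr e)), hx, fun ha => hnx (this.mpr (Or.inl ha))⟩
      · intro ⟨hne, hx, hnx⟩
        refine ⟨hx, fun h1 => ?_⟩
        rcases (hadjiff x hx).mp h1 with h | h
        · exact hnx h
        · exact hne h
    have hcard1 : (C.filter (fun x => ¬ H1.Adj v x)).card = n := by
      rw [hfil, Finset.card_erase_of_mem hwmem, hn]
      omega
    obtain ⟨H', hreach, hle', hall⟩ :=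
      ih (hclique.mono hle) (hle hadj) hcard1
    exact ⟨H', Relation.ReflTransGen.head hstep hreach, le_trans hle hle', hall⟩

lemma list_grow {V : Type*} [DecidableEq V] {t : ℕ} (ht : 2 ≤ t) (l : List V) :
    ∀ (H : SimpleGraph V) (C : Finset V), H.IsClique (C : Set V) → t + 1 ≤ C.card →
    l.Nodup → (∀ x ∈ l, x ∉ C) →
    (∀ i (hi : i < l.length),
      ∃ u, (u ∈ C ∨ u ∈ l.take i) ∧ H.Adj (l.get ⟨i, hi⟩) u) →
    ∃ H', SatReaches (Kst 2 t) H H' ∧ H.IsClique (C : Set V) ∧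
      H'.IsClique ((C ∪ l.toFinset : Finset V) : Set V) := by
  classical
  induction l with
  | nil =>
    intro H C hclique hC _ _ _
    exact ⟨H, Relation.ReflTransGen.refl, hclique, by simpa using hclique⟩
  | cons a rest ih =>
    intro H C hclique hC hnd hnotin horder
    have haC : a ∉ C := hnotin a (List.mem_cons_self (a := a) (l := rest))
    obtain ⟨u, hu, hadj⟩ := horder 0 (by simp)
    simp only [List.take_zero, List.not_mem_nil, or_false] at hu
    have hget : (a :: rest).get ⟨0, by simp⟩ = a := rfl
    rw [hget] at hadj
    obtain ⟨H1, hreach1, hle1, hall1⟩ := grow_clique ht hclique hC haC hu hadj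
    have hclique1 : H1.IsClique ((insert a C : Finset V) : Set V) := by
      rw [Finset.coe_insert, SimpleGraph.isClique_insert]
      refine ⟨hclique.mono hle1, fun b hb hne => hall1 b hb⟩
    have hrestnd : rest.Nodup := (List.nodup_cons.mp hnd).2
    have hanotin : a ∉ rest := (List.nodup_cons.mp hnd).1
    have hnotin' : ∀ x ∈ rest, x ∉ (insert a C : Finset V) := by
      intro x hx
      simp only [Finset.mem_insert]
      rintro (rfl | h)
      · exact hanotin hx
      · exact hnotin x (List.mem_cons_of_mem a hx) h
    have horder' : ∀ i (hi : i < rest.length),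
        ∃ u, (u ∈ (insert a C : Finset V) ∨ u ∈ rest.take i) ∧
          H1.Adj (rest.get ⟨i, hi⟩) u := by
      intro i hi
      obtain ⟨u', hu', hadj'⟩ := horder (i + 1) (by simpa using Nat.succ_lt_succ hi)
      have hg : (a :: rest).get ⟨i + 1, by simpa using Nat.succ_lt_succ hi⟩
          = rest.get ⟨i, hi⟩ := rfl
      rw [hg] at hadj'
      refine ⟨u', ?_, hle1 hadj'⟩
      rcases hu' with h | h
      · exact Or.inl (Finset.mem_insert_of_mem h)
      · rw [List.take_succ_cons] at h
        rcases List.mem_cons.mp h with rfl | h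
        · exact Or.inl (Finset.mem_insert_self _ _)
        · exact Or.inr h
    have hcard1 : t + 1 ≤ (insert a C).card := le_trans hC (Finset.card_le_card (Finset.subset_insert a C))
    obtain ⟨H', hreach', hcl', hcl''⟩ :=
      ih H1 (insert a C) hclique1 hcard1 hrestnd hnotin' horder'
    refine ⟨H', hreach1.trans hreach', hclique, ?_⟩
    have : (insert a C ∪ rest.toFinset : Finset V) = (C ∪ (a :: rest).toFinset : Finset V) := by
      ext x
      simp only [List.toFinset_cons, Finset.mem_union, Finset.mem_insert]
      tauto
    rwa [this] at hcl''

theorem satReaches_top_of_clique {V : Type*} [Fintype V] (t : ℕ) (ht : 2 ≤ t)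
    (hn : t + 2 ≤ Fintype.card V)
    (G : SimpleGraph V) (hconn : G.Connected)
    (K : Finset V) (hK : K.card = t + 1) (hclique : G.IsClique (K : Set V))
    (l : List V) (hnd : l.Nodup) (hmem : ∀ v, v ∈ l ↔ v ∉ K)
    (horder : ∀ i (hi : i < l.length),
      ∃ u, (u ∈ K ∨ u ∈ l.take i) ∧ G.Adj (l.get ⟨i, hi⟩) u) :
    SatReaches (Kst 2 t) G ⊤ := by
  classical
  obtain ⟨H', hreach, _, hcl⟩ :=
    list_grow ht l G K hclique (le_of_eq hK.symm) hnd (fun x hx => (hmem x).mp hx) horder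
  have huniv : (K ∪ l.toFinset : Finset V) = Finset.univ := by
    ext x
    simp only [Finset.mem_union, Finset.mem_univ, iff_true, List.mem_toFinset]
    by_cases h : x ∈ K
    · exact Or.inl h
    · exact Or.inr ((hmem x).mpr h)
  rw [huniv] at hcl
  have : H' = ⊤ := by
    apply le_antisymm le_top
    intro a b hab
    exact hcl (by simp) (by simp) hab.ne
  rwa [this] at hreach
end
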